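/- arXiv:2510.05269 — 6 statements merged into one kernel-verified Lean document; each statement's English description precedes it below -/
import Mathlib

section
/- Let α ≠ 0, ℓ' > 0, and let h : [0,δ) → ℝ be C^1 near 0 with h(z) = αz + S(z), where S ∈ F^1_{1+ℓ'}. If H : im(h) → ℝ denotes the local inverse of h, written H(y) = α^{-1} y + 𝓗(y) with 𝓗(y) = o(y), then 𝓗 satisfies 𝓗(y) = −α^{-1} S(H(y)) and 𝓗 ∈ F^1_{1+ℓ'}; i.e., there exists C₁ > 0 such that |𝓗(y)| ≤ C₁|y|^{1+ℓ'} and |𝓗'(y)| ≤ C₁|y|^{ℓ'} for all small y > 0. -/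
open Filter Topology

set_option maxHeartbeats 1000000 in
/-- If `h(z) = αz + S(z)` with `α ≠ 0` and `S ∈ F^1_{1+ℓ'}`, and `H` is a local
inverse of `h` with `H(y) = α⁻¹y + 𝓗(y)`, `𝓗(y) = o(y)`, then
`𝓗(y) = −α⁻¹ S(H(y))` and `𝓗 ∈ F^1_{1+ℓ'}`. -/
theorem inverse_remainder_flat (α ℓ' δ : ℝ) (hα : α ≠ 0) (hℓ' : 0 < ℓ') (hδ : 0 < δ)
    (S h H : ℝ → ℝ)
    (hh : ∀ z ∈ Set.Ico (0 : ℝ) δ, h z = α * z + S z)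
    (hSdiff : ∀ z ∈ Set.Ioo (0 : ℝ) δ, DifferentiableAt ℝ S z)
    (hSflat : ∃ C > (0 : ℝ), ∃ ε₀ > (0 : ℝ), ∀ z ∈ Set.Ioo (0 : ℝ) ε₀,
      |S z| ≤ C * z ^ (1 + ℓ') ∧ |deriv S z| ≤ C * z ^ ℓ')
    (y₁ : ℝ) (hy₁ : 0 < y₁)
    (hHrange : ∀ y ∈ Set.Ioo (0 : ℝ) y₁, H y ∈ Set.Ico (0 : ℝ) δ)
    (hinv : ∀ y ∈ Set.Ioo (0 : ℝ) y₁, h (H y) = y)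
    (hHdiff : ∀ y ∈ Set.Ioo (0 : ℝ) y₁, DifferentiableAt ℝ H y)
    (𝓗 : ℝ → ℝ) (h𝓗 : ∀ y, 𝓗 y = H y - α⁻¹ * y)
    (hlittleo : Tendsto (fun y => 𝓗 y / y) (𝓝[>] (0 : ℝ)) (𝓝 0)) :
    (∀ y ∈ Set.Ioo (0 : ℝ) y₁, 𝓗 y = -α⁻¹ * S (H y)) ∧
      ∃ C₁ > (0 : ℝ), ∃ y₀ > (0 : ℝ), ∀ y ∈ Set.Ioo (0 : ℝ) y₀,
        |𝓗 y| ≤ C₁ * |y| ^ (1 + ℓ') ∧ |deriv 𝓗 y| ≤ C₁ * |y| ^ ℓ' := by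
  obtain ⟨C, hC, ε₀, hε₀, hSb⟩ := hSflat
  -- Part 1
  have part1 : ∀ y ∈ Set.Ioo (0 : ℝ) y₁, 𝓗 y = -α⁻¹ * S (H y) := by
    intro y hy
    have h1 : α * H y + S (H y) = y := by
      rw [← hh (H y) (hHrange y hy)]; exact hinv y hy
    rw [h𝓗 y]
    field_simp
    linarith [h1]
  refine ⟨part1, ?_⟩
  -- extract smallness of 𝓗 from little-o
  have h1 : ∀ᶠ y in 𝓝[>] (0:ℝ), |𝓗 y / y| < 1 := by
    have := Metric.tendsto_nhds.mp hlittleo 1 one_pos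
    filter_upwards [this] with y hy
    simpa [Real.dist_eq, abs_div] using hy
  rw [eventually_nhdsWithin_iff, Metric.eventually_nhds_iff] at h1
  obtain ⟨y₂, hy₂pos, hy₂⟩ := h1
  set A : ℝ := |α⁻¹| + 1 with hA_def
  have hA : (0:ℝ) < A := by positivity
  set r : ℝ := (|α| / (2 * C)) ^ (ℓ'⁻¹ : ℝ) with hr_def
  have hr : (0:ℝ) < r := Real.rpow_pos_of_pos (by positivity) _
  set t : ℝ := if 0 < S 0 then S 0 else 1 with ht_def
  have ht : 0 < t := by
    rw [ht_def]; split_ifs with h; exacts [h, one_pos]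
  set y₀ : ℝ := min y₁ (min y₂ (min (ε₀ / A) (min (δ / A) (min (r / A) t)))) with hy₀_def
  have hy₀pos : 0 < y₀ := by
    simp only [hy₀_def, lt_min_iff]
    refine ⟨hy₁, hy₂pos, by positivity, by positivity, by positivity, ht⟩
  set C₁ : ℝ := |α⁻¹| * C * A ^ ((1:ℝ) + ℓ') + 2 * C * A ^ ℓ' / α ^ 2 with hC₁_def
  have hApow1 : (0:ℝ) < A ^ ((1:ℝ) + ℓ') := Real.rpow_pos_of_pos hA _
  have hApow2 : (0:ℝ) < A ^ ℓ' := Real.rpow_pos_of_pos hA _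
  have hC₁pos : 0 < C₁ := by
    have h1 : 0 < |α⁻¹| := abs_pos.mpr (inv_ne_zero hα)
    have h2 : 0 < α ^ 2 := by positivity
    positivity
  refine ⟨C₁, hC₁pos, y₀, hy₀pos, ?_⟩
  intro y hy
  obtain ⟨hy0, hyy₀⟩ := hy
  have hbounds := hyy₀
  simp only [hy₀_def, lt_min_iff] at hbounds
  obtain ⟨hlt1, hlt2, hlt3, hlt4, hlt5, hlt6⟩ := hbounds
  have hyIoo : y ∈ Set.Ioo (0:ℝ) y₁ := ⟨hy0, hlt1⟩
  -- |𝓗 y| ≤ y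
  have h𝓗small : |𝓗 y| ≤ y := by
    have := hy₂ (by rw [Real.dist_eq, sub_zero, abs_of_pos hy0]; exact hlt2)
      (Set.mem_Ioi.mpr hy0)
    rw [abs_div, abs_of_pos hy0, div_lt_one hy0] at this
    exact this.le
  -- H y ≤ A * y
  have hHyA : H y ≤ A * y := by
    have : H y = α⁻¹ * y + 𝓗 y := by rw [h𝓗 y]; ring
    have e1 : α⁻¹ * y ≤ |α⁻¹| * y :=
      mul_le_mul_of_nonneg_right (le_abs_self α⁻¹) hy0.le
    have e2 : 𝓗 y ≤ y := (le_abs_self _).trans h𝓗small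
    calc H y = α⁻¹ * y + 𝓗 y := this
      _ ≤ |α⁻¹| * y + y := by linarith
      _ = A * y := by rw [hA_def]; ring
  have hHy0 : 0 ≤ H y := (hHrange y hyIoo).1
  have hHyδ' : H y < δ := (hHrange y hyIoo).2
  -- H y > 0
  have hHypos : 0 < H y := by
    rcases hHy0.lt_or_eq with h | h
    · exact h
    · exfalso
      have h0δ : (0:ℝ) ∈ Set.Ico (0:ℝ) δ := ⟨le_refl _, hδ⟩
      have hy_eq : y = S 0 := by
        have hi := hinv y hyIoo
        rw [← h, hh 0 h0δ] at hi
        linarith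
      by_cases hS0 : 0 < S 0
      · rw [ht_def, if_pos hS0] at hlt6; linarith
      · push_neg at hS0; linarith
  have hHyε₀ : H y < ε₀ := lt_of_le_of_lt hHyA (by rwa [mul_comm, ← lt_div_iff₀ hA])
  have hAy_r : A * y < r := by rwa [mul_comm, ← lt_div_iff₀ hA]
  obtain ⟨hS1, hS2⟩ := hSb (H y) ⟨hHypos, hHyε₀⟩
  -- rpow bounds
  have hAy0 : (0:ℝ) ≤ A * y := by positivity
  have hHpow : (H y) ^ ℓ' ≤ A ^ ℓ' * y ^ ℓ' := by
    calc (H y) ^ ℓ' ≤ (A * y) ^ ℓ' := Real.rpow_le_rpow hHy0 hHyA hℓ'.le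
      _ = A ^ ℓ' * y ^ ℓ' := Real.mul_rpow hA.le hy0.le
  have hHpow1 : (H y) ^ ((1:ℝ) + ℓ') ≤ A ^ ((1:ℝ) + ℓ') * y ^ ((1:ℝ) + ℓ') := by
    calc (H y) ^ ((1:ℝ)+ℓ') ≤ (A * y) ^ ((1:ℝ)+ℓ') :=
          Real.rpow_le_rpow hHy0 hHyA (by linarith)
      _ = A ^ ((1:ℝ)+ℓ') * y ^ ((1:ℝ)+ℓ') := Real.mul_rpow hA.le hy0.le
  -- C * (H y)^ℓ' ≤ |α|/2
  have hSderiv_small : C * (H y) ^ ℓ' ≤ |α| / 2 := by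
    have h1 : (H y) ^ ℓ' ≤ r ^ ℓ' :=
      Real.rpow_le_rpow hHy0 (le_of_lt (lt_of_le_of_lt hHyA hAy_r)) hℓ'.le
    have h2 : r ^ ℓ' = |α| / (2 * C) := by
      rw [hr_def]; exact Real.rpow_inv_rpow (by positivity) (ne_of_gt hℓ')
    rw [h2] at h1
    calc C * (H y) ^ ℓ' ≤ C * (|α| / (2 * C)) := by gcongr
      _ = |α| / 2 := by field_simp
  have habs : |y| = y := abs_of_pos hy0
  constructor
  · -- |𝓗 y| bound
    rw [part1 y hyIoo, habs, abs_mul, abs_neg]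
    calc |α⁻¹| * |S (H y)| ≤ |α⁻¹| * (C * (H y) ^ ((1:ℝ)+ℓ')) := by gcongr
      _ ≤ |α⁻¹| * (C * (A ^ ((1:ℝ)+ℓ') * y ^ ((1:ℝ)+ℓ'))) := by gcongr
      _ = (|α⁻¹| * C * A ^ ((1:ℝ)+ℓ')) * y ^ ((1:ℝ)+ℓ') := by ring
      _ ≤ C₁ * y ^ ((1:ℝ)+ℓ') := by
          have h2 : 0 ≤ 2 * C * A ^ ℓ' / α ^ 2 := by positivity
          have hyp : 0 ≤ y ^ ((1:ℝ)+ℓ') := Real.rpow_nonneg hy0.le _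
          refine mul_le_mul_of_nonneg_right ?_ hyp
          rw [hC₁_def]; linarith
  · -- derivative bound
    have hSd : DifferentiableAt ℝ S (H y) := hSdiff _ ⟨hHypos, hHyδ'⟩
    have hhd : HasDerivAt h (α + deriv S (H y)) (H y) := by
      have h1 : HasDerivAt (fun z => α * z + S z) (α * 1 + deriv S (H y)) (H y) :=
        ((hasDerivAt_id _).const_mul α).add hSd.hasDerivAt
      have h2 : h =ᶠ[𝓝 (H y)] fun z => α * z + S z := by
        filter_upwards [Ioo_mem_nhds hHypos hHyδ'] with z hz
        exact hh z ⟨hz.1.le, hz.2⟩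
      simpa using h1.congr_of_eventuallyEq h2
    have hHd : HasDerivAt H (deriv H y) y := (hHdiff y hyIoo).hasDerivAt
    have hcomp : HasDerivAt (h ∘ H) ((α + deriv S (H y)) * deriv H y) y := hhd.comp y hHd
    have hid : (h ∘ H) =ᶠ[𝓝 y] id := by
      filter_upwards [Ioo_mem_nhds hy0 hlt1] with z hz
      exact hinv z hz
    have hone : HasDerivAt (h ∘ H) 1 y := (hasDerivAt_id y).congr_of_eventuallyEq hid
    have hunique : (α + deriv S (H y)) * deriv H y = 1 := hcomp.unique hone
    set s := deriv S (H y) with hs_def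
    set d := deriv H y with hd_def
    -- |α + s| ≥ |α|/2
    have hsmall : |s| ≤ |α| / 2 := hS2.trans hSderiv_small
    have habs_sum : |α| ≤ |α + s| + |s| := by
      have h := abs_add_le (α + s) (-s)
      rw [add_neg_cancel_right, abs_neg] at h
      exact h
    have hden : |α| / 2 ≤ |α + s| := by linarith
    have hαpos : 0 < |α| := abs_pos.mpr hα
    have hαs : α + s ≠ 0 := by
      intro hcontra
      rw [hcontra, abs_zero] at hden; linarith
    -- deriv 𝓗 y = d - α⁻¹
    have h𝓗fun : 𝓗 = fun y => H y - α⁻¹ * y := funext h𝓗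
    have h𝓗d : HasDerivAt 𝓗 (d - α⁻¹) y := by
      rw [h𝓗fun]
      exact (hHd.sub ((hasDerivAt_id' y).const_mul α⁻¹)).congr_deriv (by ring)
    have hd𝓗 : deriv 𝓗 y = d - α⁻¹ := h𝓗d.deriv
    have hdval : d = (α + s)⁻¹ := eq_inv_of_mul_eq_one_left (by linarith [hunique])
    have hdiff : d - α⁻¹ = -s / ((α + s) * α) := by
      rw [hdval]; field_simp; ring
    rw [hd𝓗, hdiff, habs]
    rw [abs_div, abs_neg, abs_mul]
    have hden2 : (0:ℝ) < (|α| / 2) * |α| := by positivity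
    calc |s| / (|α + s| * |α|) ≤ (C * (H y) ^ ℓ') / ((|α| / 2) * |α|) := by
          gcongr
      _ ≤ (C * (A ^ ℓ' * y ^ ℓ')) / ((|α| / 2) * |α|) := by gcongr
      _ = (2 * C * A ^ ℓ' / α ^ 2) * y ^ ℓ' := by
          have hsq : (|α| / 2) * |α| = α ^ 2 / 2 := by
            rw [div_mul_eq_mul_div, abs_mul_abs_self, sq]
          rw [hsq]
          ring
      _ ≤ C₁ * y ^ ℓ' := by
          have h1 : 0 ≤ |α⁻¹| * C * A ^ ((1:ℝ)+ℓ') := by positivity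
          have hyp : 0 ≤ y ^ ℓ' := Real.rpow_nonneg hy0.le _
          refine mul_le_mul_of_nonneg_right ?_ hyp
          rw [hC₁_def]; linarith
end

section
/- Let D : [0,δ) → ℝ be a Dulac-type function, D(x) = α x^r + R(x) with α ≠ 0, r > 0, ℓ > 0, R ∈ F^1_{r+ℓ}. Then D is injective on a neighborhood of 0, and its inverse satisfies D^{-1}(y) = κ|y|^ρ + V(y), where κ = |α|^{-ρ}, ρ = 1/r, and V ∈ F^1_{ρ+η} for some η > 0. -/
open Set Filter

/-- MVT bound for differences of real powers on an interval away from zero. -/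
lemma rpow_sub_rpow_bound (e : ℝ) {m M t s : ℝ} (hm : 0 < m)
    (ht : t ∈ Set.Icc m M) (hs : s ∈ Set.Icc m M) :
    |t ^ e - s ^ e| ≤ (|e| * max (m ^ (e - 1)) (M ^ (e - 1))) * |t - s| := by
  have key : ∀ u ∈ Set.Icc m M, HasDerivWithinAt (fun x : ℝ => x ^ e)
      (e * u ^ (e - 1)) (Set.Icc m M) u := by
    intro u hu
    exact (Real.hasDerivAt_rpow_const (Or.inl (lt_of_lt_of_le hm hu.1).ne')).hasDerivWithinAt
  have bound : ∀ u ∈ Set.Icc m M, ‖e * u ^ (e - 1)‖ ≤ |e| * max (m ^ (e - 1)) (M ^ (e - 1)) := by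
    intro u hu
    have hu0 : 0 < u := lt_of_lt_of_le hm hu.1
    rw [Real.norm_eq_abs, abs_mul, abs_of_nonneg (Real.rpow_nonneg hu0.le _)]
    apply mul_le_mul_of_nonneg_left _ (abs_nonneg e)
    rcases le_total 0 (e - 1) with h | h
    · exact le_max_of_le_right (Real.rpow_le_rpow hu0.le hu.2 h)
    · exact le_max_of_le_left (Real.rpow_le_rpow_of_nonpos hm hu.1 h)
  have := Convex.norm_image_sub_le_of_norm_hasDerivWithin_le key bound (convex_Icc m M) hs ht
  simpa [Real.norm_eq_abs] using this

/-- If `c₁ u ≤ z ≤ c₂ u` with everything positive, then `z^p ≤ max (c₁^p) (c₂^p) * u^p`. -/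
lemma rpow_base_between {z c₁ c₂ u : ℝ} (p : ℝ) (h1 : 0 < c₁) (hu : 0 < u)
    (hl : c₁ * u ≤ z) (hu2 : z ≤ c₂ * u) :
    z ^ p ≤ max (c₁ ^ p) (c₂ ^ p) * u ^ p := by
  have hz : 0 < z := lt_of_lt_of_le (mul_pos h1 hu) hl
  have hc₂ : 0 < c₂ := by
    by_contra h
    push_neg at h
    nlinarith
  rcases le_total 0 p with h | h
  · calc z ^ p ≤ (c₂ * u) ^ p := Real.rpow_le_rpow hz.le hu2 h
      _ = c₂ ^ p * u ^ p := Real.mul_rpow hc₂.le hu.le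
      _ ≤ max (c₁ ^ p) (c₂ ^ p) * u ^ p :=
          mul_le_mul_of_nonneg_right (le_max_right _ _) (Real.rpow_nonneg hu.le p)
  · calc z ^ p ≤ (c₁ * u) ^ p := Real.rpow_le_rpow_of_nonpos (mul_pos h1 hu) hl h
      _ = c₁ ^ p * u ^ p := Real.mul_rpow h1.le hu.le
      _ ≤ max (c₁ ^ p) (c₂ ^ p) * u ^ p :=
          mul_le_mul_of_nonneg_right (le_max_left _ _) (Real.rpow_nonneg hu.le p)

set_option maxHeartbeats 1000000 in
theorem dulac_inverse_pos (δ α r ℓ : ℝ) (hδ : 0 < δ) (hα : 0 < α) (hr : 0 < r) (hℓ : 0 < ℓ)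
    (D R : ℝ → ℝ)
    (hD : ∀ x ∈ Set.Ico (0 : ℝ) δ, D x = α * x ^ r + R x)
    (hRdiff : ∀ x ∈ Set.Ioo (0 : ℝ) δ, DifferentiableAt ℝ R x)
    (hRflat : ∃ C > (0 : ℝ), ∃ ε₀ > (0 : ℝ), ∀ x ∈ Set.Ioo (0 : ℝ) ε₀,
      |R x| ≤ C * x ^ (r + ℓ) ∧ |deriv R x| ≤ C * x ^ (r + ℓ - 1)) :
    ∃ δ' > (0 : ℝ), Set.InjOn D (Set.Ico 0 δ') ∧
      ∃ η > (0 : ℝ), ∃ V : ℝ → ℝ,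
        (∃ C > (0 : ℝ), ∃ ε₀ > (0 : ℝ), ∀ y : ℝ, 0 < |y| → |y| < ε₀ →
          DifferentiableAt ℝ V y ∧
            |V y| ≤ C * |y| ^ (1 / r + η) ∧ |deriv V y| ≤ C * |y| ^ (1 / r + η - 1)) ∧
        ∀ x ∈ Set.Ico (0 : ℝ) δ',
          x = |α| ^ (-(1 / r)) * |D x| ^ (1 / r) + V (D x) := by
  classical
  obtain ⟨C, hC, ε₀, hε₀, hRf⟩ := hRflat
  have hr' : r ≠ 0 := hr.ne'
  set κ : ℝ := |α| ^ (-(1 / r)) with hκdef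
  have hκα : κ = α ^ (-(1 / r)) := by rw [hκdef, abs_of_pos hα]
  have hκ : 0 < κ := by rw [hκα]; exact Real.rpow_pos_of_pos hα _
  -- the scale `a` where everything behaves
  obtain ⟨b, hbdef⟩ : ∃ t : ℝ, t = (α / 2 * min r 1 / C) ^ (1 / ℓ) := ⟨_, rfl⟩
  have hb : 0 < b := by
    rw [hbdef]
    exact Real.rpow_pos_of_pos (div_pos (mul_pos (by linarith) (lt_min hr one_pos)) hC) _
  obtain ⟨a, hadef⟩ : ∃ t : ℝ, t = min δ (min ε₀ (min 1 b)) := ⟨_, rfl⟩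
  have ha : 0 < a := by rw [hadef]; exact lt_min hδ (lt_min hε₀ (lt_min one_pos hb))
  have haδ : a ≤ δ := by rw [hadef]; exact min_le_left _ _
  have haε₀ : a ≤ ε₀ := by rw [hadef]; exact le_trans (min_le_right _ _) (min_le_left _ _)
  have hab : a ≤ b := by
    rw [hadef]
    exact le_trans (min_le_right _ _) (le_trans (min_le_right _ _) (min_le_right _ _))
  have hsmall : ∀ x ∈ Set.Ioo (0:ℝ) a, C * x ^ ℓ ≤ α / 2 * min r 1 := by
    intro x hx
    have hxb : x < b := lt_of_lt_of_le hx.2 hab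
    have h1 : x ^ ℓ ≤ b ^ ℓ := Real.rpow_le_rpow hx.1.le hxb.le hℓ.le
    have hbℓ : b ^ ℓ = α / 2 * min r 1 / C := by
      rw [hbdef, ← Real.rpow_mul (by positivity), one_div, inv_mul_cancel₀ hℓ.ne', Real.rpow_one]
    rw [hbℓ] at h1
    calc C * x ^ ℓ ≤ C * (α / 2 * min r 1 / C) := mul_le_mul_of_nonneg_left h1 hC.le
      _ = α / 2 * min r 1 := by field_simp
  have hD0 : D 0 = R 0 := by
    have := hD 0 ⟨le_refl 0, hδ⟩
    rwa [Real.zero_rpow hr', mul_zero, zero_add] at this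
  have hRb : ∀ x ∈ Set.Ioo (0:ℝ) a, |R x| ≤ C * x ^ (r + ℓ) ∧ |deriv R x| ≤ C * x ^ (r + ℓ - 1) :=
    fun x hx => hRf x ⟨hx.1, lt_of_lt_of_le hx.2 haε₀⟩
  have hRb1 : ∀ x ∈ Set.Ioo (0:ℝ) a, |R x| ≤ α / 2 * x ^ r := by
    intro x hx
    have h1 := (hRb x hx).1
    have h2 : C * x ^ (r + ℓ) = (C * x ^ ℓ) * x ^ r := by
      rw [add_comm, Real.rpow_add hx.1]; ring
    have h3 : min r 1 ≤ 1 := min_le_right _ _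
    have h4 : (0:ℝ) ≤ x ^ r := Real.rpow_nonneg hx.1.le r
    have h5 : α / 2 * ((min r 1) * x ^ r) ≤ α / 2 * (1 * x ^ r) :=
      mul_le_mul_of_nonneg_left (mul_le_mul_of_nonneg_right h3 h4) (by linarith)
    calc |R x| ≤ C * x ^ (r + ℓ) := h1
      _ = (C * x ^ ℓ) * x ^ r := h2
      _ ≤ (α / 2 * min r 1) * x ^ r := mul_le_mul_of_nonneg_right (hsmall x hx) h4
      _ ≤ α / 2 * x ^ r := by linarith [h5]
  have hRb2 : ∀ x ∈ Set.Ioo (0:ℝ) a, |deriv R x| ≤ α * r / 2 * x ^ (r - 1) := by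
    intro x hx
    have h1 := (hRb x hx).2
    have h2 : C * x ^ (r + ℓ - 1) = (C * x ^ ℓ) * x ^ (r - 1) := by
      rw [show r + ℓ - 1 = ℓ + (r - 1) by ring, Real.rpow_add hx.1]; ring
    have h3 : min r 1 ≤ r := min_le_left _ _
    have h4 : (0:ℝ) ≤ x ^ (r - 1) := Real.rpow_nonneg hx.1.le _
    have h5 : α / 2 * ((min r 1) * x ^ (r - 1)) ≤ α / 2 * (r * x ^ (r - 1)) :=
      mul_le_mul_of_nonneg_left (mul_le_mul_of_nonneg_right h3 h4) (by linarith)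
    calc |deriv R x| ≤ C * x ^ (r + ℓ - 1) := h1
      _ = (C * x ^ ℓ) * x ^ (r - 1) := h2
      _ ≤ (α / 2 * min r 1) * x ^ (r - 1) := mul_le_mul_of_nonneg_right (hsmall x hx) h4
      _ ≤ α * r / 2 * x ^ (r - 1) := by linarith [h5]
  have hDd : ∀ x ∈ Set.Ioo (0:ℝ) a, HasDerivAt D (α * r * x ^ (r - 1) + deriv R x) x := by
    intro x hx
    have hxδ : x ∈ Set.Ioo (0:ℝ) δ := ⟨hx.1, lt_of_lt_of_le hx.2 haδ⟩
    have h1 : HasDerivAt (fun t : ℝ => α * t ^ r + R t)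
        (α * (r * x ^ (r - 1)) + deriv R x) x :=
      ((Real.hasDerivAt_rpow_const (Or.inl hx.1.ne')).const_mul α).add
        (hRdiff x hxδ).hasDerivAt
    have h2 : D =ᶠ[nhds x] fun t => α * t ^ r + R t := by
      filter_upwards [Ioo_mem_nhds hxδ.1 hxδ.2] with t ht
      exact hD t ⟨ht.1.le, ht.2⟩
    have h3 := h1.congr_of_eventuallyEq h2
    exact h3.congr_deriv (by ring)
  have hD'lb : ∀ x ∈ Set.Ioo (0:ℝ) a, α * r / 2 * x ^ (r-1) ≤ α * r * x ^ (r-1) + deriv R x := by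
    intro x hx
    have h1 := (abs_le.1 (hRb2 x hx)).1
    linarith
  have hmono : StrictMonoOn D (Set.Ioo 0 a) := by
    apply strictMonoOn_of_deriv_pos (convex_Ioo _ _)
    · intro x hx
      exact (hDd x hx).differentiableAt.continuousAt.continuousWithinAt
    · intro x hx
      rw [interior_Ioo] at hx
      rw [(hDd x hx).deriv]
      have h1 := hD'lb x hx
      have h2 : (0:ℝ) < α * r / 2 * x ^ (r-1) :=
        mul_pos (by positivity) (Real.rpow_pos_of_pos hx.1 _)
      linarith
  have hDval : ∀ x ∈ Set.Ioo (0:ℝ) a, α / 2 * x ^ r ≤ D x ∧ D x ≤ 3 * α / 2 * x ^ r := by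
    intro x hx
    have h1 := abs_le.1 (hRb1 x hx)
    rw [hD x ⟨hx.1.le, lt_of_lt_of_le hx.2 haδ⟩]
    constructor <;> linarith [h1.1, h1.2]
  -- choice of δ'
  obtain ⟨w₀, hw₀def⟩ : ∃ t : ℝ, t = (2 * R 0 / (3 * α)) ^ (1 / r) := ⟨_, rfl⟩
  obtain ⟨δ', hδ'def⟩ : ∃ t : ℝ, t = if 0 < R 0 then min (a / 2) w₀ else a / 2 := ⟨_, rfl⟩
  have hδ'pos : 0 < δ' := by
    rw [hδ'def]
    split_ifs with h
    · refine lt_min (by linarith) ?_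
      rw [hw₀def]
      exact Real.rpow_pos_of_pos (div_pos (by linarith) (by linarith)) _
    · linarith
  have hδ'a2 : δ' ≤ a / 2 := by
    rw [hδ'def]; split_ifs
    · exact min_le_left _ _
    · exact le_refl _
  have hδ'a : δ' < a := lt_of_le_of_lt hδ'a2 (by linarith)
  have hsub : Set.Ioo (0:ℝ) δ' ⊆ Set.Ioo (0:ℝ) a :=
    fun x hx => ⟨hx.1, lt_trans hx.2 hδ'a⟩
  have hDpos : ∀ x ∈ Set.Ioo (0:ℝ) δ', 0 < D x := by
    intro x hx
    have h1 := (hDval x (hsub hx)).1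
    have h2 : (0:ℝ) < α / 2 * x ^ r :=
      mul_pos (by linarith) (Real.rpow_pos_of_pos hx.1 _)
    linarith
  have hDltR0 : ∀ x ∈ Set.Ioo (0:ℝ) δ', 0 < R 0 → D x < R 0 := by
    intro x hx h0
    have hw : δ' ≤ w₀ := by rw [hδ'def, if_pos h0]; exact min_le_right _ _
    have hxw : x < w₀ := lt_of_lt_of_le hx.2 hw
    have hwr : w₀ ^ r = 2 * R 0 / (3 * α) := by
      rw [hw₀def, ← Real.rpow_mul (le_of_lt (div_pos (by linarith) (by linarith))),
        one_div, inv_mul_cancel₀ hr', Real.rpow_one]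
    have h1 : x ^ r < w₀ ^ r := Real.rpow_lt_rpow hx.1.le hxw hr
    rw [hwr] at h1
    have h2 := (hDval x (hsub hx)).2
    calc D x ≤ 3 * α / 2 * x ^ r := h2
      _ < 3 * α / 2 * (2 * R 0 / (3 * α)) :=
          mul_lt_mul_of_pos_left h1 (by linarith)
      _ = R 0 := by field_simp
  have hD0ne : ∀ x ∈ Set.Ioo (0:ℝ) δ', D x ≠ D 0 := by
    intro x hx
    rw [hD0]
    rcases le_or_gt (R 0) 0 with h | h
    · exact (lt_of_le_of_lt h (hDpos x hx)).ne'
    · exact (hDltR0 x hx h).ne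
  have hinj : Set.InjOn D (Set.Ico 0 δ') := by
    intro x hx y hy hxy
    rcases hx.1.eq_or_lt with hx0 | hx0
    · rcases hy.1.eq_or_lt with hy0 | hy0
      · rw [← hx0, ← hy0]
      · exact absurd (by rw [← hxy, ← hx0]) (hD0ne y ⟨hy0, hy.2⟩)
    · rcases hy.1.eq_or_lt with hy0 | hy0
      · exact absurd (by rw [hxy, ← hy0]) (hD0ne x ⟨hx0, hx.2⟩)
      · exact hmono.injOn (hsub ⟨hx0, hx.2⟩) (hsub ⟨hy0, hy.2⟩) hxy
  -- choice of ε₁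
  obtain ⟨ε₁, hε₁def⟩ : ∃ t : ℝ, t = min 1 (min (α / 2 * (δ' / 2) ^ r) (if R 0 = 0 then 1 else |R 0|)) := ⟨_, rfl⟩
  have hε₁pos : 0 < ε₁ := by
    rw [hε₁def]
    refine lt_min one_pos (lt_min ?_ ?_)
    · exact mul_pos (by linarith) (Real.rpow_pos_of_pos (by linarith) _)
    · split_ifs with h
      · exact one_pos
      · exact abs_pos.2 h
  have hε₁D : ε₁ ≤ α / 2 * (δ' / 2) ^ r := by
    rw [hε₁def]; exact le_trans (min_le_right _ _) (min_le_left _ _)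
  have hε₁R0 : ∀ t : ℝ, 0 < |t| → |t| < ε₁ → t ≠ R 0 := by
    intro t h1 h2 h3
    by_cases h0 : R 0 = 0
    · rw [h3, h0, abs_zero] at h1; exact lt_irrefl 0 h1
    · have h4 : ε₁ ≤ |R 0| := by
        rw [hε₁def]
        refine le_trans (min_le_right _ _) (le_trans (min_le_right _ _) ?_)
        rw [if_neg h0]
      rw [h3] at h2; linarith
  -- surjectivity onto (0, ε₁)
  have hsurj : ∀ y ∈ Set.Ioo (0:ℝ) ε₁, ∃ z ∈ Set.Ioo (0:ℝ) δ', D z = y := by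
    intro y hy
    set x₁ : ℝ := min (δ' / 2) ((2 * y / (3 * α)) ^ (1 / r) / 2) with hx₁def
    have hvpos : (0:ℝ) < (2 * y / (3 * α)) ^ (1 / r) :=
      Real.rpow_pos_of_pos (div_pos (by linarith [hy.1]) (by linarith)) _
    have hx₁pos : 0 < x₁ := lt_min (by linarith) (by linarith)
    have hx₁le : x₁ ≤ δ' / 2 := min_le_left _ _
    have hhalf : δ' / 2 ∈ Set.Ioo (0:ℝ) a := ⟨by linarith, by linarith⟩
    have hDx₁ : D x₁ < y := by
      have hx₁a : x₁ ∈ Set.Ioo (0:ℝ) a := ⟨hx₁pos, by linarith [hx₁le]⟩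
      have h2 := (hDval x₁ hx₁a).2
      have hlt : x₁ < (2 * y / (3 * α)) ^ (1 / r) :=
        lt_of_le_of_lt (min_le_right _ _) (by linarith)
      have h3 : x₁ ^ r < 2 * y / (3 * α) := by
        have h4 := Real.rpow_lt_rpow hx₁pos.le hlt hr
        rwa [← Real.rpow_mul (le_of_lt (div_pos (by linarith [hy.1]) (by linarith))),
          one_div, inv_mul_cancel₀ hr', Real.rpow_one] at h4
      calc D x₁ ≤ 3 * α / 2 * x₁ ^ r := h2
        _ < 3 * α / 2 * (2 * y / (3 * α)) :=
            mul_lt_mul_of_pos_left h3 (by linarith)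
        _ = y := by field_simp
    have hD2 : y ≤ D (δ' / 2) := by
      have h1 := (hDval _ hhalf).1
      linarith [hy.2, hε₁D]
    have hcont : ContinuousOn D (Set.Icc x₁ (δ' / 2)) := by
      intro t ht
      have hta : t ∈ Set.Ioo (0:ℝ) a :=
        ⟨lt_of_lt_of_le hx₁pos ht.1, lt_of_le_of_lt ht.2 (by linarith)⟩
      exact (hDd t hta).differentiableAt.continuousAt.continuousWithinAt
    obtain ⟨z, hz, hDz⟩ := intermediate_value_Icc hx₁le hcont ⟨hDx₁.le, hD2⟩
    exact ⟨z, ⟨lt_of_lt_of_le hx₁pos hz.1, lt_of_le_of_lt hz.2 (by linarith)⟩, hDz⟩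
  -- the inverse function g and the function V
  set g : ℝ → ℝ := Function.invFunOn D (Set.Ico 0 δ') with hgdef
  obtain ⟨V, hVpos, hVneg⟩ : ∃ V : ℝ → ℝ,
      (∀ t ∈ D '' (Set.Ico (0:ℝ) δ'), V t = g t - κ * |t| ^ (1 / r)) ∧
      (∀ t ∉ D '' (Set.Ico (0:ℝ) δ'), V t = 0) :=
    ⟨fun y => if y ∈ D '' (Set.Ico (0:ℝ) δ') then g y - κ * |y| ^ (1 / r) else 0,
      fun t ht => if_pos ht, fun t ht => if_neg ht⟩
  have hg : ∀ y ∈ Set.Ioo (0:ℝ) ε₁,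
      g y ∈ Set.Ioo (0:ℝ) δ' ∧ D (g y) = y ∧ y ∈ D '' (Set.Ico (0:ℝ) δ') := by
    intro y hy
    obtain ⟨z, hz, hDz⟩ := hsurj y hy
    have hex : ∃ x ∈ Set.Ico (0:ℝ) δ', D x = y := ⟨z, ⟨hz.1.le, hz.2⟩, hDz⟩
    have hmem := Function.invFunOn_mem hex
    have heq := Function.invFunOn_eq hex
    have hne : g y ≠ 0 := by
      intro h
      apply hε₁R0 y (by rw [abs_of_pos hy.1]; exact hy.1)
        (by rw [abs_of_pos hy.1]; exact hy.2)
      have heq' : D (g y) = y := heq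
      rw [h] at heq'
      rw [← heq', hD0]
    exact ⟨⟨hmem.1.lt_of_ne (Ne.symm hne), hmem.2⟩, heq, ⟨z, ⟨hz.1.le, hz.2⟩, hDz⟩⟩
  -- the defining equation
  have heqn : ∀ x ∈ Set.Ico (0:ℝ) δ', x = κ * |D x| ^ (1 / r) + V (D x) := by
    intro x hx
    have himg : D x ∈ D '' (Set.Ico 0 δ') := ⟨x, hx, rfl⟩
    have h2 : g (D x) = x := hinj.leftInvOn_invFunOn hx
    rw [hVpos _ himg, h2]
    ring

  -- the analytic core: differentiability and bounds on (0, ε₁)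
  have hmain : ∃ Kv > (0:ℝ), ∃ Kd > (0:ℝ), ∀ y ∈ Set.Ioo (0:ℝ) ε₁,
      DifferentiableAt ℝ V y ∧ |V y| ≤ Kv * y ^ (1 / r + ℓ / r) ∧
        |deriv V y| ≤ Kd * y ^ (1 / r + ℓ / r - 1) := by
    obtain ⟨c₁, hc₁def⟩ : ∃ t : ℝ, t = (2 / (3 * α)) ^ (1 / r) := ⟨_, rfl⟩
    obtain ⟨c₂, hc₂def⟩ : ∃ t : ℝ, t = (2 / α) ^ (1 / r) := ⟨_, rfl⟩
    have hc₁ : 0 < c₁ := by rw [hc₁def]; exact Real.rpow_pos_of_pos (div_pos two_pos (by linarith)) _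
    obtain ⟨m₁, hm₁def⟩ : ∃ t : ℝ, t = max ((α / 2) ^ (1 / r - 1)) ((3 * α / 2) ^ (1 / r - 1)) := ⟨_, rfl⟩
    obtain ⟨m₂, hm₂def⟩ : ∃ t : ℝ, t = max ((α / 2) ^ (1 / r - 1 - 1)) ((3 * α / 2) ^ (1 / r - 1 - 1)) := ⟨_, rfl⟩
    have hm₁ : 0 < m₁ := by rw [hm₁def]; exact lt_max_of_lt_left (Real.rpow_pos_of_pos (by linarith) _)
    have hm₂ : 0 < m₂ := by rw [hm₂def]; exact lt_max_of_lt_left (Real.rpow_pos_of_pos (by linarith) _)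
    have hrinv : (0:ℝ) < 1 / r := one_div_pos.2 hr
    have hK1 : (0:ℝ) < κ * ((1 / r) * m₁) * C :=
      mul_pos (mul_pos hκ (mul_pos hrinv hm₁)) hC
    have hK2 : (0:ℝ) < 2 * C / (α * r * (α * r)) + κ * (1 / r) * (|1 / r - 1| * m₂) * C := by
      have h1 : (0:ℝ) < 2 * C / (α * r * (α * r)) :=
        div_pos (by linarith) (mul_pos (mul_pos hα hr) (mul_pos hα hr))
      have h2 : (0:ℝ) ≤ κ * (1 / r) * (|1 / r - 1| * m₂) * C :=
        mul_nonneg (mul_nonneg (mul_nonneg hκ.le hrinv.le)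
          (mul_nonneg (abs_nonneg _) hm₂.le)) hC.le
      linarith
    refine ⟨(κ * ((1 / r) * m₁) * C) * max (c₁ ^ (1 + ℓ)) (c₂ ^ (1 + ℓ)),
      mul_pos hK1 (lt_max_of_lt_left (Real.rpow_pos_of_pos hc₁ _)),
      (2 * C / (α * r * (α * r)) + κ * (1 / r) * (|1 / r - 1| * m₂) * C)
        * max (c₁ ^ (1 - r + ℓ)) (c₂ ^ (1 - r + ℓ)),
      mul_pos hK2 (lt_max_of_lt_left (Real.rpow_pos_of_pos hc₁ _)), ?_⟩
    intro y hy
    obtain ⟨hgy, hDgy, himg⟩ := hg y hy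
    obtain ⟨z, hzdef⟩ : ∃ t : ℝ, t = g y := ⟨_, rfl⟩
    rw [← hzdef] at hgy hDgy
    have hza : z ∈ Set.Ioo (0:ℝ) a := hsub hgy
    have hz0 : 0 < z := hza.1
    have hy1 : α / 2 * z ^ r ≤ y := by rw [← hDgy]; exact (hDval z hza).1
    have hy2 : y ≤ 3 * α / 2 * z ^ r := by rw [← hDgy]; exact (hDval z hza).2
    have hyR : R z = y - α * z ^ r := by
      have h1 := hD z ⟨hz0.le, lt_of_lt_of_le hza.2 haδ⟩
      rw [← hDgy, h1]; ring
    -- continuity of g at y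
    have hcontg : ContinuousAt g y := by
      have htend : Filter.Tendsto g (nhds y) (nhds z) := by
        rw [tendsto_order]
        constructor
        · intro p hp
          have hb1 : max p (z / 2) < z := max_lt hp (by linarith)
          have hb0 : 0 < max p (z / 2) := lt_of_lt_of_le (by linarith) (le_max_right _ _)
          have hba : max p (z / 2) ∈ Set.Ioo (0:ℝ) a := ⟨hb0, lt_trans hb1 hza.2⟩
          have hDb : D (max p (z / 2)) < y := by
            rw [← hDgy]; exact hmono hba hza hb1
          have hDbpos : 0 < D (max p (z / 2)) := by
            have h1 := (hDval _ hba).1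
            have h2 : (0:ℝ) < α / 2 * (max p (z / 2)) ^ r :=
              mul_pos (by linarith) (Real.rpow_pos_of_pos hb0 _)
            linarith
          filter_upwards [Ioo_mem_nhds hDb hy.2] with t ht
          obtain ⟨hgt, hDgt, _⟩ := hg t ⟨lt_trans hDbpos ht.1, ht.2⟩
          by_contra hle
          push_neg at hle
          have h3 : g t ≤ max p (z / 2) := le_trans hle (le_max_left _ _)
          have h4 := hmono.monotoneOn (hsub hgt) hba h3
          rw [hDgt] at h4
          linarith [ht.1]
        · intro p hp
          have hb1 : z < min p ((z + δ') / 2) := lt_min hp (by linarith [hgy.2])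
          have hbδ' : min p ((z + δ') / 2) < δ' :=
            lt_of_le_of_lt (min_le_right _ _) (by linarith [hgy.2])
          have hba : min p ((z + δ') / 2) ∈ Set.Ioo (0:ℝ) a :=
            ⟨lt_trans hz0 hb1, lt_trans hbδ' hδ'a⟩
          have hDb : y < D (min p ((z + δ') / 2)) := by
            rw [← hDgy]; exact hmono hza hba hb1
          filter_upwards [Ioo_mem_nhds hy.1 (lt_min hy.2 hDb)] with t ht
          obtain ⟨hgt, hDgt, _⟩ := hg t ⟨ht.1, lt_of_lt_of_le ht.2 (min_le_left _ _)⟩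
          by_contra hle
          push_neg at hle
          have h3 : min p ((z + δ') / 2) ≤ g t := le_trans (min_le_left _ _) hle
          have h4 := hmono.monotoneOn hba (hsub hgt) h3
          rw [hDgt] at h4
          linarith [lt_of_lt_of_le ht.2 (min_le_right _ _)]
      have hzg : g y = z := hzdef.symm
      rw [ContinuousAt, hzg]
      exact htend
    -- derivative of the inverse
    have hR'z := hRb2 z hza
    have hwlb : α * r / 2 * z ^ (r - 1) ≤ α * r * z ^ (r - 1) + deriv R z := hD'lb z hza
    have hzr1 : (0:ℝ) < z ^ (r - 1) := Real.rpow_pos_of_pos hz0 _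
    have hApos : 0 < α * r * z ^ (r - 1) := mul_pos (mul_pos hα hr) hzr1
    have hwpos : 0 < α * r * z ^ (r - 1) + deriv R z := by linarith
    have hgderiv : HasDerivAt g (α * r * z ^ (r - 1) + deriv R z)⁻¹ y := by
      have h1 : HasDerivAt D (α * r * z ^ (r - 1) + deriv R z) (g y) := by
        rw [← hzdef]; exact hDd z hza
      apply HasDerivAt.of_local_left_inverse hcontg h1 hwpos.ne'
      filter_upwards [Ioo_mem_nhds hy.1 hy.2] with t ht
      exact (hg t ht).2.1
    have hyne : y ≠ 0 := hy.1.ne'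
    have hVev : V =ᶠ[nhds y] fun t => g t - κ * t ^ (1 / r) := by
      filter_upwards [Ioo_mem_nhds hy.1 hy.2] with t ht
      rw [hVpos t (hg t ht).2.2, abs_of_pos ht.1]
    have hVderiv : HasDerivAt V
        ((α * r * z ^ (r - 1) + deriv R z)⁻¹ - κ * ((1 / r) * y ^ (1 / r - 1))) y := by
      have h1 : HasDerivAt (fun t : ℝ => g t - κ * t ^ (1 / r))
          ((α * r * z ^ (r - 1) + deriv R z)⁻¹ - κ * ((1 / r) * y ^ (1 / r - 1))) y :=
        hgderiv.sub ((Real.hasDerivAt_rpow_const (Or.inl hyne)).const_mul κ)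
      exact h1.congr_of_eventuallyEq hVev
    -- common estimates
    have hVy : V y = z - κ * y ^ (1 / r) := by
      rw [hVpos y himg, abs_of_pos hy.1, ← hzdef]
    have hIccz : α * z ^ r ∈ Set.Icc (α / 2 * z ^ r) (3 * α / 2 * z ^ r) := by
      have hP := mul_nonneg hα.le (Real.rpow_nonneg hz0.le r)
      constructor <;> linarith
    have hIccy : y ∈ Set.Icc (α / 2 * z ^ r) (3 * α / 2 * z ^ r) := ⟨hy1, hy2⟩
    have hmpos : 0 < α / 2 * z ^ r := mul_pos (by linarith) (Real.rpow_pos_of_pos hz0 _)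
    have habs : |α * z ^ r - y| ≤ C * z ^ (r + ℓ) := by
      rw [abs_sub_comm, ← hyR]
      exact (hRb z hza).1
    have hmaxgen : ∀ e : ℝ, max ((α / 2 * z ^ r) ^ e) ((3 * α / 2 * z ^ r) ^ e)
        = max ((α / 2) ^ e) ((3 * α / 2) ^ e) * z ^ (r * e) := by
      intro e
      rw [Real.mul_rpow (by linarith) (Real.rpow_nonneg hz0.le r),
        Real.mul_rpow (by linarith) (Real.rpow_nonneg hz0.le r),
        ← Real.rpow_mul hz0.le,
        max_mul_of_nonneg _ _ (Real.rpow_nonneg hz0.le _)]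
    have hzc₂ : z ≤ c₂ * y ^ (1 / r) := by
      have h1 : z ^ r ≤ 2 / α * y := by
        rw [div_mul_eq_mul_div, le_div_iff₀ hα]
        linarith
      calc z = (z ^ r) ^ (1 / r) := by
            rw [← Real.rpow_mul hz0.le, mul_one_div, div_self hr', Real.rpow_one]
        _ ≤ (2 / α * y) ^ (1 / r) :=
            Real.rpow_le_rpow (Real.rpow_nonneg hz0.le r) h1 hrinv.le
        _ = c₂ * y ^ (1 / r) := by
            rw [hc₂def]; exact Real.mul_rpow (le_of_lt (div_pos two_pos hα)) hy.1.le
    have hzc₁ : c₁ * y ^ (1 / r) ≤ z := by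
      have h1 : 2 / (3 * α) * y ≤ z ^ r := by
        rw [div_mul_eq_mul_div, div_le_iff₀ (by linarith : (0:ℝ) < 3 * α)]
        linarith
      calc c₁ * y ^ (1 / r) = (2 / (3 * α) * y) ^ (1 / r) := by
            rw [hc₁def]
            exact (Real.mul_rpow (le_of_lt (div_pos two_pos (by linarith))) hy.1.le).symm
        _ ≤ (z ^ r) ^ (1 / r) :=
            Real.rpow_le_rpow
              (mul_nonneg (le_of_lt (div_pos two_pos (by linarith))) hy.1.le) h1 hrinv.le
        _ = z := by rw [← Real.rpow_mul hz0.le, mul_one_div, div_self hr', Real.rpow_one]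
    have hypow : (0:ℝ) < y ^ (1 / r) := Real.rpow_pos_of_pos hy.1 _
    -- bound on |V y|
    have hzid : z = κ * (α * z ^ r) ^ (1 / r) := by
      rw [hκα, Real.mul_rpow hα.le (Real.rpow_nonneg hz0.le r),
        ← Real.rpow_mul hz0.le, mul_one_div, div_self hr', Real.rpow_one,
        ← mul_assoc, ← Real.rpow_add hα, show -(1 / r) + 1 / r = 0 by ring,
        Real.rpow_zero, one_mul]
    have hVb1 : |V y| ≤ (κ * ((1 / r) * m₁) * C) * z ^ (1 + ℓ) := by
      have h0 : κ * ((α * z ^ r) ^ (1 / r) - y ^ (1 / r)) = V y := by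
        rw [hVy, mul_sub, ← hzid]
      rw [← h0, abs_mul, abs_of_pos hκ]
      have hbd := rpow_sub_rpow_bound (1 / r) hmpos hIccz hIccy
      rw [hmaxgen (1 / r - 1), ← hm₁def] at hbd
      have h1 : |(α * z ^ r) ^ (1 / r) - y ^ (1 / r)|
          ≤ (1 / r * (m₁ * z ^ (r * (1 / r - 1)))) * (C * z ^ (r + ℓ)) := by
        refine le_trans hbd ?_
        rw [abs_of_pos hrinv]
        exact mul_le_mul_of_nonneg_left habs
          (mul_nonneg hrinv.le (mul_nonneg hm₁.le (Real.rpow_nonneg hz0.le _)))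
      calc κ * |(α * z ^ r) ^ (1 / r) - y ^ (1 / r)|
          ≤ κ * ((1 / r * (m₁ * z ^ (r * (1 / r - 1)))) * (C * z ^ (r + ℓ))) :=
            mul_le_mul_of_nonneg_left h1 hκ.le
        _ = (κ * ((1 / r) * m₁) * C) * (z ^ (r * (1 / r - 1)) * z ^ (r + ℓ)) := by ring
        _ = (κ * ((1 / r) * m₁) * C) * z ^ (1 + ℓ) := by
            rw [← Real.rpow_add hz0, show r * (1 / r - 1) + (r + ℓ) = 1 + ℓ by
              field_simp; try ring]
    have hVbfin : |V y| ≤ (κ * ((1 / r) * m₁) * C) * max (c₁ ^ (1 + ℓ)) (c₂ ^ (1 + ℓ))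
        * y ^ (1 / r + ℓ / r) := by
      have h1 := rpow_base_between (1 + ℓ) hc₁ hypow hzc₁ hzc₂
      have h2 : (y ^ (1 / r)) ^ (1 + ℓ) = y ^ (1 / r + ℓ / r) := by
        rw [← Real.rpow_mul hy.1.le, show 1 / r * (1 + ℓ) = 1 / r + ℓ / r by ring]
      rw [h2] at h1
      calc |V y| ≤ (κ * ((1 / r) * m₁) * C) * z ^ (1 + ℓ) := hVb1
        _ ≤ (κ * ((1 / r) * m₁) * C)
            * (max (c₁ ^ (1 + ℓ)) (c₂ ^ (1 + ℓ)) * y ^ (1 / r + ℓ / r)) :=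
            mul_le_mul_of_nonneg_left h1 hK1.le
        _ = _ := by ring
    -- bound on |deriv V y|
    have hdV : deriv V y
        = (α * r * z ^ (r - 1) + deriv R z)⁻¹ - κ * ((1 / r) * y ^ (1 / r - 1)) :=
      hVderiv.deriv
    have hpowdiv : z ^ (r + ℓ - 1) / (z ^ (r - 1) * z ^ (r - 1)) = z ^ (1 - r + ℓ) := by
      rw [show z ^ (r - 1) * z ^ (r - 1) = z ^ (r - 1 + (r - 1)) from
        (Real.rpow_add hz0 _ _).symm, ← Real.rpow_sub hz0,
        show r + ℓ - 1 - (r - 1 + (r - 1)) = 1 - r + ℓ by ring]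
    have hpart1 : |(α * r * z ^ (r - 1) + deriv R z)⁻¹ - (α * r * z ^ (r - 1))⁻¹|
        ≤ 2 * C / (α * r * (α * r)) * z ^ (1 - r + ℓ) := by
      have hAw : (α * r * z ^ (r - 1) + deriv R z)⁻¹ - (α * r * z ^ (r - 1))⁻¹
          = (α * r * z ^ (r - 1) - (α * r * z ^ (r - 1) + deriv R z))
            / ((α * r * z ^ (r - 1) + deriv R z) * (α * r * z ^ (r - 1))) := by
        field_simp
      rw [hAw, abs_div, abs_of_pos (mul_pos hwpos hApos)]
      have hnum : |α * r * z ^ (r - 1) - (α * r * z ^ (r - 1) + deriv R z)|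
          ≤ C * z ^ (r + ℓ - 1) := by
        rw [show α * r * z ^ (r - 1) - (α * r * z ^ (r - 1) + deriv R z)
          = -(deriv R z) by ring, abs_neg]
        exact (hRb z hza).2
      have hden : α * r * z ^ (r - 1) * (α * r * z ^ (r - 1)) / 2
          ≤ (α * r * z ^ (r - 1) + deriv R z) * (α * r * z ^ (r - 1)) := by
        linarith [mul_le_mul_of_nonneg_right hwlb hApos.le]
      calc |α * r * z ^ (r - 1) - (α * r * z ^ (r - 1) + deriv R z)|
            / ((α * r * z ^ (r - 1) + deriv R z) * (α * r * z ^ (r - 1)))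
          ≤ (C * z ^ (r + ℓ - 1)) / (α * r * z ^ (r - 1) * (α * r * z ^ (r - 1)) / 2) :=
            div_le_div₀ (mul_nonneg hC.le (Real.rpow_nonneg hz0.le _)) hnum
              (div_pos (mul_pos hApos hApos) two_pos) hden
        _ = 2 * C / (α * r * (α * r))
            * (z ^ (r + ℓ - 1) / (z ^ (r - 1) * z ^ (r - 1))) := by
            field_simp
        _ = 2 * C / (α * r * (α * r)) * z ^ (1 - r + ℓ) := by rw [hpowdiv]
    have hA_id : (α * r * z ^ (r - 1))⁻¹ = κ * (1 / r) * (α * z ^ r) ^ (1 / r - 1) := by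
      rw [hκα, Real.mul_rpow hα.le (Real.rpow_nonneg hz0.le r), ← Real.rpow_mul hz0.le,
        show r * (1 / r - 1) = -(r - 1) by field_simp; try ring,
        Real.rpow_neg hz0.le,
        show α ^ (-(1 / r)) * (1 / r) * (α ^ (1 / r - 1) * (z ^ (r - 1))⁻¹)
          = (α ^ (-(1 / r)) * α ^ (1 / r - 1)) * ((1 / r) * (z ^ (r - 1))⁻¹) by ring,
        ← Real.rpow_add hα, show -(1 / r) + (1 / r - 1) = -1 by ring, Real.rpow_neg_one,
        mul_inv, mul_inv]
      ring
    have hpart2 : |(α * r * z ^ (r - 1))⁻¹ - κ * ((1 / r) * y ^ (1 / r - 1))|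
        ≤ (κ * (1 / r) * (|1 / r - 1| * m₂) * C) * z ^ (1 - r + ℓ) := by
      rw [hA_id,
        show κ * (1 / r) * (α * z ^ r) ^ (1 / r - 1) - κ * ((1 / r) * y ^ (1 / r - 1))
          = κ * (1 / r) * ((α * z ^ r) ^ (1 / r - 1) - y ^ (1 / r - 1)) by ring,
        abs_mul, abs_of_nonneg (mul_nonneg hκ.le hrinv.le)]
      have hbd := rpow_sub_rpow_bound (1 / r - 1) hmpos hIccz hIccy
      rw [hmaxgen (1 / r - 1 - 1), ← hm₂def] at hbd
      have h1 : |(α * z ^ r) ^ (1 / r - 1) - y ^ (1 / r - 1)|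
          ≤ (|1 / r - 1| * (m₂ * z ^ (r * (1 / r - 1 - 1)))) * (C * z ^ (r + ℓ)) :=
        le_trans hbd (mul_le_mul_of_nonneg_left habs
          (mul_nonneg (abs_nonneg _) (mul_nonneg hm₂.le (Real.rpow_nonneg hz0.le _))))
      calc κ * (1 / r) * |(α * z ^ r) ^ (1 / r - 1) - y ^ (1 / r - 1)|
          ≤ κ * (1 / r) * ((|1 / r - 1| * (m₂ * z ^ (r * (1 / r - 1 - 1))))
              * (C * z ^ (r + ℓ))) :=
            mul_le_mul_of_nonneg_left h1 (mul_nonneg hκ.le hrinv.le)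
        _ = (κ * (1 / r) * (|1 / r - 1| * m₂) * C)
            * (z ^ (r * (1 / r - 1 - 1)) * z ^ (r + ℓ)) := by ring
        _ = (κ * (1 / r) * (|1 / r - 1| * m₂) * C) * z ^ (1 - r + ℓ) := by
            rw [← Real.rpow_add hz0, show r * (1 / r - 1 - 1) + (r + ℓ) = 1 - r + ℓ by
              field_simp; try ring]
    have hderivz : |deriv V y|
        ≤ (2 * C / (α * r * (α * r)) + κ * (1 / r) * (|1 / r - 1| * m₂) * C)
          * z ^ (1 - r + ℓ) := by
      rw [hdV, show (α * r * z ^ (r - 1) + deriv R z)⁻¹ - κ * ((1 / r) * y ^ (1 / r - 1))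
        = ((α * r * z ^ (r - 1) + deriv R z)⁻¹ - (α * r * z ^ (r - 1))⁻¹)
          + ((α * r * z ^ (r - 1))⁻¹ - κ * ((1 / r) * y ^ (1 / r - 1))) by ring]
      calc _ ≤ |(α * r * z ^ (r - 1) + deriv R z)⁻¹ - (α * r * z ^ (r - 1))⁻¹|
            + |(α * r * z ^ (r - 1))⁻¹ - κ * ((1 / r) * y ^ (1 / r - 1))| := abs_add_le _ _
        _ ≤ 2 * C / (α * r * (α * r)) * z ^ (1 - r + ℓ)
            + (κ * (1 / r) * (|1 / r - 1| * m₂) * C) * z ^ (1 - r + ℓ) :=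
            add_le_add hpart1 hpart2
        _ = _ := by ring
    have hderivfin : |deriv V y|
        ≤ (2 * C / (α * r * (α * r)) + κ * (1 / r) * (|1 / r - 1| * m₂) * C)
            * max (c₁ ^ (1 - r + ℓ)) (c₂ ^ (1 - r + ℓ)) * y ^ (1 / r + ℓ / r - 1) := by
      have h1 := rpow_base_between (1 - r + ℓ) hc₁ hypow hzc₁ hzc₂
      have h2 : (y ^ (1 / r)) ^ (1 - r + ℓ) = y ^ (1 / r + ℓ / r - 1) := by
        rw [← Real.rpow_mul hy.1.le, show 1 / r * (1 - r + ℓ) = 1 / r + ℓ / r - 1 by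
          field_simp; try ring]
      rw [h2] at h1
      calc |deriv V y| ≤ (2 * C / (α * r * (α * r)) + κ * (1 / r) * (|1 / r - 1| * m₂) * C)
            * z ^ (1 - r + ℓ) := hderivz
        _ ≤ (2 * C / (α * r * (α * r)) + κ * (1 / r) * (|1 / r - 1| * m₂) * C)
            * (max (c₁ ^ (1 - r + ℓ)) (c₂ ^ (1 - r + ℓ)) * y ^ (1 / r + ℓ / r - 1)) :=
            mul_le_mul_of_nonneg_left h1 hK2.le
        _ = _ := by ring
    exact ⟨hVderiv.differentiableAt, hVbfin, hderivfin⟩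
  -- V vanishes on the negative side
  have hneg : ∀ y ∈ Set.Ioo (-ε₁) (0:ℝ), V =ᶠ[nhds y] fun _ => (0:ℝ) := by
    intro y hy
    filter_upwards [Ioo_mem_nhds hy.1 hy.2] with t ht
    apply hVneg
    rintro ⟨x, hx, hDx⟩
    rcases hx.1.eq_or_lt with h0 | h0
    · apply hε₁R0 t (abs_pos.2 ht.2.ne) (by rw [abs_of_neg ht.2]; linarith [ht.1])
      rw [← hDx, ← h0, hD0]
    · have := hDpos x ⟨h0, hx.2⟩
      rw [hDx] at this
      linarith [ht.2]
  -- assemble everything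
  obtain ⟨Kv, hKv, Kd, hKd, hbounds⟩ := hmain
  refine ⟨δ', hδ'pos, hinj, ℓ / r, div_pos hℓ hr, V, ?_, heqn⟩
  refine ⟨max 1 (max Kv Kd), by positivity, ε₁, hε₁pos, ?_⟩
  intro y hy0 hyε
  rcases lt_trichotomy y 0 with hneg0 | h0 | hpos0
  · have hy' : y ∈ Set.Ioo (-ε₁) (0:ℝ) := by
      constructor
      · rw [abs_of_neg hneg0] at hyε; linarith
      · exact hneg0
    have hev := hneg y hy'
    have hVy0 : V y = 0 := hev.eq_of_nhds
    have hd0 : deriv V y = 0 := by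
      rw [hev.deriv_eq]
      exact deriv_const y 0
    refine ⟨hev.differentiableAt_iff.2 (differentiableAt_const 0), ?_, ?_⟩
    · rw [hVy0, abs_zero]
      positivity
    · rw [hd0, abs_zero]
      positivity
  · rw [h0, abs_zero] at hy0; exact absurd hy0 (lt_irrefl 0)
  · obtain ⟨h1, h2, h3⟩ := hbounds y ⟨hpos0, by rwa [abs_of_pos hpos0] at hyε⟩
    have hmKv : Kv ≤ max 1 (max Kv Kd) := le_trans (le_max_left _ _) (le_max_right _ _)
    have hmKd : Kd ≤ max 1 (max Kv Kd) := le_trans (le_max_right _ _) (le_max_right _ _)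
    refine ⟨h1, ?_, ?_⟩
    · rw [abs_of_pos hpos0]
      exact le_trans h2 (mul_le_mul_of_nonneg_right hmKv (Real.rpow_nonneg hpos0.le _))
    · rw [abs_of_pos hpos0]
      exact le_trans h3 (mul_le_mul_of_nonneg_right hmKd (Real.rpow_nonneg hpos0.le _))


/-- Inverse of a Dulac-type function: if `D(x) = α x^r + R(x)` with `α ≠ 0`, `r, ℓ > 0`
and `R ∈ F^1_{r+ℓ}`, then `D` is injective near `0` and its inverse satisfies
`D⁻¹(y) = |α|^{-1/r} |y|^{1/r} + V(y)` with `V ∈ F^1_{1/r + η}` for some `η > 0`. -/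
theorem dulac_inverse (δ α r ℓ : ℝ) (hδ : 0 < δ) (hα : α ≠ 0) (hr : 0 < r) (hℓ : 0 < ℓ)
    (D R : ℝ → ℝ)
    (hD : ∀ x ∈ Set.Ico (0 : ℝ) δ, D x = α * x ^ r + R x)
    (hRdiff : ∀ x ∈ Set.Ioo (0 : ℝ) δ, DifferentiableAt ℝ R x)
    (hRflat : ∃ C > (0 : ℝ), ∃ ε₀ > (0 : ℝ), ∀ x ∈ Set.Ioo (0 : ℝ) ε₀,
      |R x| ≤ C * x ^ (r + ℓ) ∧ |deriv R x| ≤ C * x ^ (r + ℓ - 1)) :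
    ∃ δ' > (0 : ℝ), Set.InjOn D (Set.Ico 0 δ') ∧
      ∃ η > (0 : ℝ), ∃ V : ℝ → ℝ,
        (∃ C > (0 : ℝ), ∃ ε₀ > (0 : ℝ), ∀ y : ℝ, 0 < |y| → |y| < ε₀ →
          DifferentiableAt ℝ V y ∧
            |V y| ≤ C * |y| ^ (1 / r + η) ∧ |deriv V y| ≤ C * |y| ^ (1 / r + η - 1)) ∧
        ∀ x ∈ Set.Ico (0 : ℝ) δ',
          x = |α| ^ (-(1 / r)) * |D x| ^ (1 / r) + V (D x) := by
  rcases hα.lt_or_gt with hneg | hpos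
  · -- α < 0 : apply the positive case to -D
    obtain ⟨C, hC, ε₀, hε₀, hRf⟩ := hRflat
    have hD' : ∀ x ∈ Set.Ico (0:ℝ) δ, (fun t => -(D t)) x = (-α) * x ^ r + (fun t => -(R t)) x := by
      intro x hx
      show -(D x) = -α * x ^ r + -(R x)
      rw [hD x hx]; ring
    have hRdiff' : ∀ x ∈ Set.Ioo (0:ℝ) δ, DifferentiableAt ℝ (fun t => -(R t)) x :=
      fun x hx => (hRdiff x hx).neg
    have hRflat' : ∃ C > (0:ℝ), ∃ ε₀ > (0:ℝ), ∀ x ∈ Set.Ioo (0:ℝ) ε₀,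
        |(fun t => -(R t)) x| ≤ C * x ^ (r + ℓ) ∧
          |deriv (fun t => -(R t)) x| ≤ C * x ^ (r + ℓ - 1) := by
      refine ⟨C, hC, ε₀, hε₀, fun x hx => ⟨?_, ?_⟩⟩
      · simpa [abs_neg] using (hRf x hx).1
      · rw [deriv.fun_neg, abs_neg]; exact (hRf x hx).2
    obtain ⟨δ', hδ', hinj', η, hη, V', hflat', heqn'⟩ :=
      dulac_inverse_pos δ (-α) r ℓ hδ (by linarith) hr hℓ _ _ hD' hRdiff' hRflat'
    refine ⟨δ', hδ', ?_, η, hη, fun y => V' (-y), ?_, ?_⟩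
    · intro x hx y hy h
      exact hinj' hx hy (by show -(D x) = -(D y); rw [h])
    · obtain ⟨C', hC', ε₁, hε₁, hb⟩ := hflat'
      refine ⟨C', hC', ε₁, hε₁, fun y hy1 hy2 => ?_⟩
      obtain ⟨hdiff, hb1, hb2⟩ := hb (-y) (by rwa [abs_neg]) (by rwa [abs_neg])
      refine ⟨?_, ?_, ?_⟩
      · exact hdiff.comp y (differentiable_neg.differentiableAt)
      · simpa [abs_neg] using hb1
      · have h2' : HasDerivAt (fun t : ℝ => V' (-t)) (deriv V' (-y) * (-1)) y :=
          (hdiff.hasDerivAt).comp y (hasDerivAt_neg y)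
        have hdc : deriv (fun t : ℝ => V' (-t)) y = -(deriv V' (-y)) := by
          rw [h2'.deriv]; ring
        rw [hdc, abs_neg]
        simpa [abs_neg] using hb2
    · intro x hx
      have h := heqn' x hx
      rw [abs_neg, abs_neg] at h
      exact h
  · exact dulac_inverse_pos δ α r ℓ hδ hpos hr hℓ D R hD hRdiff hRflat
end

section
/- (Topological pseudo-Hopf, displacement-map version) Let φ⁺, φ⁻ : [0, x₀) → ℝ be continuous with φ±(0) = 0, φ±(x) < 0 on (0, x₀), and φ⁺(x) − φ⁻(x) ≠ 0 on (0, x₀). Let δ ∈ {−1,1}, σ := sign(δ(φ⁺(x) − φ⁻(x))) (constant on (0,x₀)), and suppose δσ = −1. Then there exists b₀ > 0 such that for every b ∈ (0, b₀) there exists x* ∈ (b, x₀) with δ(φ⁺(x* − b) + b − φ⁻(x*)) = 0. -/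
/-- Topological pseudo-Hopf bifurcation, displacement-map version: under the sign
condition `δσ = −1`, for every small `b > 0` the displacement function
`Δ(x,b) = δ(φ⁺(x−b) + b − φ⁻(x))` has a zero `xs ∈ (b, x₀)`. -/
theorem topological_pseudo_hopf (x₀ : ℝ) (hx₀ : 0 < x₀) (φp φm : ℝ → ℝ)
    (hφpc : ContinuousOn φp (Set.Ico 0 x₀)) (hφmc : ContinuousOn φm (Set.Ico 0 x₀))
    (hφp0 : φp 0 = 0) (hφm0 : φm 0 = 0)
    (hφpneg : ∀ x ∈ Set.Ioo (0 : ℝ) x₀, φp x < 0)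
    (hφmneg : ∀ x ∈ Set.Ioo (0 : ℝ) x₀, φm x < 0)
    (hne : ∀ x ∈ Set.Ioo (0 : ℝ) x₀, φp x - φm x ≠ 0)
    (δ σ : ℝ) (hδ : δ = 1 ∨ δ = -1)
    (hσ : ∀ x ∈ Set.Ioo (0 : ℝ) x₀, Real.sign (δ * (φp x - φm x)) = σ)
    (hδσ : δ * σ = -1) :
    ∃ b₀ > (0 : ℝ), ∀ b ∈ Set.Ioo (0 : ℝ) b₀,
      ∃ xs ∈ Set.Ioo b x₀, δ * (φp (xs - b) + b - φm xs) = 0 := by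
  -- Step 1: φp - φm < 0 on (0, x₀)
  have hlt : ∀ x ∈ Set.Ioo (0 : ℝ) x₀, φp x - φm x < 0 := by
    intro x hx
    by_contra h
    push_neg at h
    have hpos : 0 < φp x - φm x := lt_of_le_of_ne h (Ne.symm (hne x hx))
    have hs := hσ x hx
    rcases hδ with h1 | h1
    · rw [h1, one_mul, Real.sign_of_pos hpos] at hs
      rw [h1, one_mul, ← hs] at hδσ
      norm_num at hδσ
    · have hneg : δ * (φp x - φm x) < 0 := by
        rw [h1]; nlinarith
      rw [Real.sign_of_neg hneg] at hs
      rw [h1, ← hs] at hδσ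
      norm_num at hδσ
  -- Fix a reference point x₁ = x₀ / 2
  set x₁ : ℝ := x₀ / 2 with hx₁def
  have hx₁ : x₁ ∈ Set.Ioo (0 : ℝ) x₀ := ⟨by positivity, by linarith⟩
  have hx₁Ico : x₁ ∈ Set.Ico (0 : ℝ) x₀ := ⟨le_of_lt hx₁.1, hx₁.2⟩
  set c : ℝ := φm x₁ - φp x₁ with hcdef
  have hc : 0 < c := by have := hlt x₁ hx₁; linarith
  -- Continuity of φp at x₁ within the domain, ε = c/2
  have hcw : ContinuousWithinAt φp (Set.Ico 0 x₀) x₁ := hφpc x₁ hx₁Ico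
  rw [Metric.continuousWithinAt_iff] at hcw
  obtain ⟨d, hd, hball⟩ := hcw (c / 2) (by positivity)
  refine ⟨min x₁ (min d (c / 2)), by positivity, ?_⟩
  intro b hb
  obtain ⟨hb0, hbu⟩ := hb
  have hb1 : b < x₁ := lt_of_lt_of_le hbu (min_le_left _ _)
  have hb2 : b < d := lt_of_lt_of_le hbu (le_trans (min_le_right _ _) (min_le_left _ _))
  have hb3 : b < c / 2 := lt_of_lt_of_le hbu (le_trans (min_le_right _ _) (min_le_right _ _))
  -- The displacement function without δ
  set g : ℝ → ℝ := fun x => φp (x - b) + b - φm x with hgdef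
  have hg : ContinuousOn g (Set.Icc b x₁) := by
    apply ContinuousOn.sub
    · apply ContinuousOn.add
      · apply hφpc.comp (continuousOn_id.sub continuousOn_const)
        intro x hx
        exact ⟨by simp; linarith [hx.1], by simp; linarith [hx.2, hx₁.2]⟩
      · exact continuousOn_const
    · exact hφmc.mono (fun x hx => ⟨by linarith [hx.1], by linarith [hx.2, hx₁.2]⟩)
  -- g b > 0
  have hgb : 0 < g b := by
    have hφmb : φm b < 0 := hφmneg b ⟨hb0, lt_trans hb1 hx₁.2⟩
    simp only [hgdef, sub_self, hφp0]
    linarith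
  -- g x₁ < 0
  have hgx₁ : g x₁ < 0 := by
    have hmem : x₁ - b ∈ Set.Ico (0 : ℝ) x₀ := ⟨by linarith, by linarith⟩
    have hdist : dist (x₁ - b) x₁ < d := by
      rw [Real.dist_eq]
      rw [abs_of_nonpos (by linarith)]
      simpa using hb2
    have h1 := hball hmem hdist
    rw [Real.dist_eq] at h1
    have h2 : φp (x₁ - b) < φp x₁ + c / 2 := by
      have := abs_lt.mp h1
      linarith [this.2]
    simp only [hgdef]
    linarith
  -- IVT
  have hiv := intermediate_value_Ioo' (le_of_lt hb1) hg
  have h0 : (0 : ℝ) ∈ Set.Ioo (g x₁) (g b) := ⟨hgx₁, hgb⟩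
  obtain ⟨xs, hxs, hgxs⟩ := hiv h0
  refine ⟨xs, ⟨hxs.1, lt_trans hxs.2 hx₁.2⟩, ?_⟩
  have : φp (xs - b) + b - φm xs = 0 := hgxs
  rw [this, mul_zero]
end

section
/- Suppose φ± : [0, x₀) → ℝ are C^k (k ≥ 2) with φ±(x) = ∑_{i=1}^k α_i± x^i + o(x^k), and suppose the displacement coefficients V_i = δ(α_i⁺ − α_i⁻) vanish for i < N and V_N ≠ 0, where 2 ≤ N ≤ k. Define Ω(y, β) := Δ(βy, β^N)/β^N for β ≠ 0, where Δ(x,b) = δ(φ⁺(x−b)+b−φ⁻(x)). Then Ω extends continuously to β = 0 with Ω(y,0) = V_N y^N + δ(1 − α₁⁺). -/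
open Filter Topology Asymptotics

/-- The rescaled displacement function `Ω(y,β) = Δ(βy, β^N)/β^N` extends continuously
to `β = 0` with `Ω(y,0) = V_N y^N + δ(1 − α₁⁺)`. -/
theorem rescaled_displacement_limit (x₀ : ℝ) (hx₀ : 0 < x₀) (k N : ℕ)
    (hN2 : 2 ≤ N) (hNk : N ≤ k)
    (φp φm : ℝ → ℝ) (αp αm : ℕ → ℝ) (δ : ℝ) (hδ : δ = 1 ∨ δ = -1)
    (hφp : (fun x => φp x - ∑ i ∈ Finset.Icc 1 k, αp i * x ^ i)
      =o[𝓝[≥] (0 : ℝ)] fun x => x ^ k)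
    (hφm : (fun x => φm x - ∑ i ∈ Finset.Icc 1 k, αm i * x ^ i)
      =o[𝓝[≥] (0 : ℝ)] fun x => x ^ k)
    (V : ℕ → ℝ) (hV : ∀ i, V i = δ * (αp i - αm i))
    (hVvanish : ∀ i, 1 ≤ i → i < N → V i = 0) (hVN : V N ≠ 0) :
    ∀ y > (0 : ℝ),
      Tendsto
        (fun β : ℝ => δ * (φp (β * y - β ^ N) + β ^ N - φm (β * y)) / β ^ N)
        (𝓝[>] (0 : ℝ)) (𝓝 (V N * y ^ N + δ * (1 - αp 1))) := by
  intro y hy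
  have hN0 : N ≠ 0 := by omega
  set u : ℝ → ℝ := fun β => β * y - β ^ N with hu_def
  set v : ℝ → ℝ := fun β => β * y with hv_def
  -- eventually facts
  have hIoo : Set.Ioo (0:ℝ) (min 1 y) ∈ 𝓝[>] (0:ℝ) :=
    Ioo_mem_nhdsGT_of_mem ⟨le_refl 0, lt_min one_pos hy⟩
  have hkey : ∀ β ∈ Set.Ioo (0:ℝ) (min 1 y),
      0 ≤ u β ∧ u β ≤ β * y ∧ β ^ k ≤ β ^ N := by
    intro β hβ
    obtain ⟨hβ0, hβm⟩ := hβ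
    have hβ1 : β ≤ 1 := le_of_lt (lt_of_lt_of_le hβm (min_le_left _ _))
    have hβy : β ≤ y := le_of_lt (lt_of_lt_of_le hβm (min_le_right _ _))
    have h1 : β ^ N ≤ β * y := by
      have h2 : β ^ (N - 1) ≤ β ^ 1 := pow_le_pow_of_le_one hβ0.le hβ1 (by omega)
      have h3 : β ^ N = β * β ^ (N - 1) := by
        rw [← pow_succ']
        congr 1
        omega
      rw [h3]
      calc β * β ^ (N-1) ≤ β * β ^ 1 := by nlinarith
        _ ≤ β * y := by nlinarith
    refine ⟨by simp [hu_def]; linarith, by simp [hu_def]; positivity, ?_⟩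
    exact pow_le_pow_of_le_one hβ0.le hβ1 hNk
  have hu_tendsto : Tendsto u (𝓝[>] (0:ℝ)) (𝓝[≥] (0:ℝ)) := by
    rw [tendsto_nhdsWithin_iff]
    constructor
    · have hc : Continuous u := by fun_prop
      have h : Tendsto u (𝓝[>] (0:ℝ)) (𝓝 (u 0)) := (hc.tendsto 0).mono_left nhdsWithin_le_nhds
      simpa [hu_def, zero_pow hN0] using h
    · filter_upwards [hIoo] with β hβ
      exact (hkey β hβ).1
  have hv_tendsto : Tendsto v (𝓝[>] (0:ℝ)) (𝓝[≥] (0:ℝ)) := by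
    rw [tendsto_nhdsWithin_iff]
    constructor
    · have hc : Continuous v := by fun_prop
      have h : Tendsto v (𝓝[>] (0:ℝ)) (𝓝 (v 0)) := (hc.tendsto 0).mono_left nhdsWithin_le_nhds
      simpa [hv_def] using h
    · filter_upwards [hIoo] with β hβ
      have := hβ.1
      simp [hv_def]
      positivity
  -- big-O bounds
  have hOu : (fun β => (u β) ^ k) =O[𝓝[>] (0:ℝ)] fun β => β ^ N := by
    rw [Asymptotics.isBigO_iff]
    refine ⟨y ^ k, ?_⟩
    filter_upwards [hIoo] with β hβ
    obtain ⟨h0, h1, h2⟩ := hkey β hβ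
    have hβ0 := hβ.1
    have : (u β) ^ k ≤ β ^ N * y ^ k := by
      calc (u β) ^ k ≤ (β * y) ^ k := pow_le_pow_left₀ h0 h1 k
        _ = β ^ k * y ^ k := by rw [mul_pow]
        _ ≤ β ^ N * y ^ k := by
            have : (0:ℝ) ≤ y ^ k := by positivity
            nlinarith
    rw [Real.norm_eq_abs, Real.norm_eq_abs, abs_of_nonneg (pow_nonneg h0 k),
      abs_of_nonneg (by positivity : (0:ℝ) ≤ β ^ N)]
    linarith
  have hOv : (fun β => (v β) ^ k) =O[𝓝[>] (0:ℝ)] fun β => β ^ N := by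
    rw [Asymptotics.isBigO_iff]
    refine ⟨y ^ k, ?_⟩
    filter_upwards [hIoo] with β hβ
    obtain ⟨h0, h1, h2⟩ := hkey β hβ
    have hβ0 := hβ.1
    have hv0 : (0:ℝ) ≤ v β := by simp [hv_def]; positivity
    have : (v β) ^ k ≤ β ^ N * y ^ k := by
      calc (v β) ^ k = β ^ k * y ^ k := by rw [hv_def]; rw [mul_pow]
        _ ≤ β ^ N * y ^ k := by
            have : (0:ℝ) ≤ y ^ k := by positivity
            nlinarith
    rw [Real.norm_eq_abs, Real.norm_eq_abs, abs_of_nonneg (pow_nonneg hv0 k),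
      abs_of_nonneg (by positivity : (0:ℝ) ≤ β ^ N)]
    linarith
  -- little-o parts
  have hA : Tendsto (fun β => δ * ((φp (u β) - ∑ i ∈ Finset.Icc 1 k, αp i * (u β) ^ i) / β ^ N))
      (𝓝[>] (0:ℝ)) (𝓝 0) := by
    have h1 := (hφp.comp_tendsto hu_tendsto).trans_isBigO hOu
    have h2 := h1.tendsto_div_nhds_zero
    have h3 := h2.const_mul δ
    simpa using h3
  have hB : Tendsto (fun β => -δ * ((φm (v β) - ∑ i ∈ Finset.Icc 1 k, αm i * (v β) ^ i) / β ^ N))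
      (𝓝[>] (0:ℝ)) (𝓝 0) := by
    have h1 := (hφm.comp_tendsto hv_tendsto).trans_isBigO hOv
    have h2 := h1.tendsto_div_nhds_zero
    have h3 := h2.const_mul (-δ)
    simpa using h3
  -- polynomial part
  set t : ℕ → ℝ → ℝ := fun i β =>
    -(δ * αp i) * (∑ j ∈ Finset.range i, (u β) ^ j * (v β) ^ (i - 1 - j))
      + V i * y ^ i * β ^ (i - N) with ht_def
  set c : ℕ → ℝ := fun i => (if i = 1 then -(δ * αp i) else 0)
      + (if i = N then V N * y ^ N else 0) with hc_def
  have hti : ∀ i ∈ Finset.Icc 1 k, Tendsto (t i) (𝓝[>] (0:ℝ)) (𝓝 (c i)) := by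
    intro i hi
    rw [Finset.mem_Icc] at hi
    have ha : Tendsto (fun β => -(δ * αp i) * (∑ j ∈ Finset.range i, (u β) ^ j * (v β) ^ (i - 1 - j)))
        (𝓝 (0:ℝ)) (𝓝 (if i = 1 then -(δ * αp i) else 0)) := by
      have hcont : Continuous (fun β : ℝ =>
          -(δ * αp i) * (∑ j ∈ Finset.range i, (u β) ^ j * (v β) ^ (i - 1 - j))) := by
        fun_prop
      have h := hcont.tendsto 0
      have hval : -(δ * αp i) * (∑ j ∈ Finset.range i, (u 0) ^ j * (v 0) ^ (i - 1 - j))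
          = (if i = 1 then -(δ * αp i) else 0) := by
        have hu0 : u 0 = 0 := by simp [hu_def, zero_pow hN0]
        have hv0 : v 0 = 0 := by simp [hv_def]
        rw [hu0, hv0]
        rcases eq_or_ne i 1 with h1 | h1
        · subst h1; simp
        · rw [if_neg h1]
          have : (∑ j ∈ Finset.range i, (0:ℝ) ^ j * (0:ℝ) ^ (i - 1 - j)) = 0 := by
            apply Finset.sum_eq_zero
            intro j hj
            rw [Finset.mem_range] at hj
            rcases Nat.eq_zero_or_pos j with h0 | h0
            · subst h0
              simp [Nat.sub_zero, zero_pow (show i - 1 ≠ 0 by omega)]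
            · simp [zero_pow h0.ne']
          rw [this, mul_zero]
      rwa [hval] at h
    have hb : Tendsto (fun β : ℝ => V i * y ^ i * β ^ (i - N))
        (𝓝 (0:ℝ)) (𝓝 (if i = N then V N * y ^ N else 0)) := by
      rcases lt_trichotomy i N with hlt | heq | hgt
      · have hVi : V i = 0 := hVvanish i hi.1 hlt
        rw [if_neg (by omega)]
        simpa [hVi] using tendsto_const_nhds (α := ℝ) (f := 𝓝 (0:ℝ)) (a := (0:ℝ))
      · subst heq
        rw [if_pos rfl]
        have : (fun β : ℝ => V i * y ^ i * β ^ (i - i)) = fun _ => V i * y ^ i := by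
          funext β; simp
        rw [this]
        exact tendsto_const_nhds
      · rw [if_neg (by omega)]
        have hcont : Continuous (fun β : ℝ => V i * y ^ i * β ^ (i - N)) := by fun_prop
        have h := hcont.tendsto 0
        have : V i * y ^ i * (0:ℝ) ^ (i - N) = 0 := by
          have : i - N ≠ 0 := by omega
          simp [zero_pow this]
        rwa [this] at h
    have hab : Tendsto (t i) (𝓝[>] (0:ℝ))
        (𝓝 ((if i = 1 then -(δ * αp i) else 0) + if i = N then V N * y ^ N else 0)) :=
      (ha.add hb).mono_left nhdsWithin_le_nhds
    simpa [hc_def] using hab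
  have hsum : Tendsto (fun β => δ + ∑ i ∈ Finset.Icc 1 k, t i β) (𝓝[>] (0:ℝ))
      (𝓝 (δ + ∑ i ∈ Finset.Icc 1 k, c i)) :=
    tendsto_const_nhds.add (tendsto_finset_sum _ hti)
  have hcsum : (∑ i ∈ Finset.Icc 1 k, c i) = -(δ * αp 1) + V N * y ^ N := by
    rw [hc_def]
    rw [Finset.sum_add_distrib]
    rw [Finset.sum_ite_eq' (Finset.Icc 1 k) 1 (fun i => -(δ * αp i))]
    rw [Finset.sum_ite_eq' (Finset.Icc 1 k) N (fun _ => V N * y ^ N)]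
    rw [if_pos (by rw [Finset.mem_Icc]; omega), if_pos (by rw [Finset.mem_Icc]; omega)]
  have hC : Tendsto (fun β => δ * ((∑ i ∈ Finset.Icc 1 k, αp i * (u β) ^ i) + β ^ N
        - ∑ i ∈ Finset.Icc 1 k, αm i * (v β) ^ i) / β ^ N)
      (𝓝[>] (0:ℝ)) (𝓝 (δ + (-(δ * αp 1) + V N * y ^ N))) := by
    rw [← hcsum]
    apply hsum.congr'
    filter_upwards [self_mem_nhdsWithin] with β (hβ : 0 < β)
    have hβN : β ^ N ≠ 0 := by positivity
    rw [eq_div_iff hβN]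
    rw [add_mul, Finset.sum_mul]
    have hterm : ∀ i ∈ Finset.Icc 1 k,
        t i β * β ^ N = δ * (αp i * (u β) ^ i - αm i * (v β) ^ i) := by
      intro i hi
      rw [Finset.mem_Icc] at hi
      have hg := geom_sum₂_mul (u β) (v β) i
      have hVt : V i * y ^ i * β ^ (i - N) * β ^ N = V i * (v β) ^ i := by
        rcases lt_or_ge i N with hlt | hle
        · rw [hVvanish i hi.1 hlt]; ring
        · have hpow : β ^ (i - N) * β ^ N = β ^ i := by
            rw [← pow_add]; congr 1; omega
          rw [hv_def]
          calc V i * y ^ i * β ^ (i - N) * β ^ N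
              = V i * y ^ i * (β ^ (i - N) * β ^ N) := by ring
            _ = V i * y ^ i * β ^ i := by rw [hpow]
            _ = V i * (β * y) ^ i := by rw [mul_pow]; ring
      rw [ht_def]
      simp only
      rw [add_mul, hVt]
      have huv : u β - v β = -β ^ N := by simp [hu_def, hv_def]
      rw [hV i]
      linear_combination (δ * αp i) * hg + (δ * αp i) * (∑ j ∈ Finset.range i, (u β) ^ j * (v β) ^ (i - 1 - j)) * huv
    rw [Finset.sum_congr rfl hterm]
    rw [← Finset.mul_sum, Finset.sum_sub_distrib]
    ring
  -- combine
  have hmain := (hA.add hB).add hC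
  rw [zero_add, zero_add] at hmain
  have heq : (fun β : ℝ => δ * (φp (β * y - β ^ N) + β ^ N - φm (β * y)) / β ^ N)
      = fun β => δ * ((φp (u β) - ∑ i ∈ Finset.Icc 1 k, αp i * (u β) ^ i) / β ^ N)
        + -δ * ((φm (v β) - ∑ i ∈ Finset.Icc 1 k, αm i * (v β) ^ i) / β ^ N)
        + δ * ((∑ i ∈ Finset.Icc 1 k, αp i * (u β) ^ i) + β ^ N
            - ∑ i ∈ Finset.Icc 1 k, αm i * (v β) ^ i) / β ^ N := by
    funext β
    rw [hu_def, hv_def]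
    ring
  rw [heq]
  have : V N * y ^ N + δ * (1 - αp 1) = δ + (-(δ * αp 1) + V N * y ^ N) := by ring
  rw [this]
  exact hmain
end

section
/- Let ℓ' > 0, C > 0, α ≠ 0, and let 𝓗 : (0, y₀) → ℝ satisfy |𝓗(y)| ≤ C y^{1+ℓ'} and |𝓗'(y)| ≤ C y^{ℓ'} for y ∈ (0, y₀). Define W(y) := ∑_{k=1}^∞ binom(1/r, k) α^k (𝓗(y)/y)^k for r > 0. Then W ∈ F^1_{ℓ'}: there exist C₁, C₂ > 0 such that |W(y)| ≤ C₁ y^{ℓ'} and |W'(y)| ≤ C₂ y^{ℓ'−1} for all sufficiently small y > 0. -/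
/-- Generalized binomial coefficient `a(a−1)⋯(a−k+1)/k!`. -/
noncomputable def genBinom (a : ℝ) (k : ℕ) : ℝ :=
  (∏ i ∈ Finset.range k, (a - i)) / (Nat.factorial k)

lemma abs_genBinom_le (a : ℝ) (k : ℕ) : |genBinom a k| ≤ (|a| + 1) ^ k := by
  unfold genBinom
  rw [abs_div, abs_of_pos (by positivity : (0:ℝ) < (Nat.factorial k : ℝ)),
    div_le_iff₀ (by positivity), Finset.abs_prod]
  calc ∏ i ∈ Finset.range k, |a - (i:ℝ)|
      ≤ ∏ i ∈ Finset.range k, ((|a| + 1) * ((i:ℝ) + 1)) := by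
        refine Finset.prod_le_prod (fun i _ => abs_nonneg _) (fun i _ => ?_)
        have h1 : |a - (i:ℝ)| ≤ |a| + (i:ℝ) := by
          calc |a - (i:ℝ)| ≤ |a| + |(i:ℝ)| := abs_sub a _
            _ = |a| + (i:ℝ) := by rw [Nat.abs_cast]
        nlinarith [abs_nonneg a, (Nat.cast_nonneg i : (0:ℝ) ≤ (i:ℝ))]
    _ = (|a| + 1) ^ k * (Nat.factorial k : ℝ) := by
        rw [Finset.prod_mul_distrib, Finset.prod_const, Finset.card_range]
        congr 1
        rw [← Finset.prod_range_add_one_eq_factorial k]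
        push_cast
        rfl

lemma rpow_le_max_aux {a b z t : ℝ} (ha : 0 < a) (haz : a ≤ z) (hzb : z ≤ b) :
    z ^ t ≤ max (a ^ t) (b ^ t) := by
  rcases le_or_gt 0 t with ht | ht
  · exact le_max_of_le_right (Real.rpow_le_rpow (le_trans ha.le haz) hzb ht)
  · exact le_max_of_le_left (Real.rpow_le_rpow_of_nonpos ha haz ht.le)

/-- If `|𝓗(y)| ≤ C y^{1+ℓ'}` and `|𝓗'(y)| ≤ C y^{ℓ'}` near `0`, then
`W(y) = ∑_{k≥1} binom(1/r,k) α^k (𝓗(y)/y)^k` belongs to `F^1_{ℓ'}`. -/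
theorem binomial_series_remainder_flat (r ℓ' C α y₀ : ℝ) (hr : 0 < r)
    (hℓ' : 0 < ℓ') (hC : 0 < C) (hα : α ≠ 0) (hy₀ : 0 < y₀) (H : ℝ → ℝ)
    (hHdiff : ∀ y ∈ Set.Ioo (0 : ℝ) y₀, DifferentiableAt ℝ H y)
    (hHbound : ∀ y ∈ Set.Ioo (0 : ℝ) y₀, |H y| ≤ C * y ^ (1 + ℓ'))
    (hHderiv : ∀ y ∈ Set.Ioo (0 : ℝ) y₀, |deriv H y| ≤ C * y ^ ℓ') :
    let W : ℝ → ℝ := fun y => ∑' k : ℕ, genBinom (1 / r) (k + 1) * α ^ (k + 1) *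
      (H y / y) ^ (k + 1)
    ∃ C₁ > (0 : ℝ), ∃ C₂ > (0 : ℝ), ∃ y₁ > (0 : ℝ), ∀ y ∈ Set.Ioo (0 : ℝ) y₁,
      DifferentiableAt ℝ W y ∧
        |W y| ≤ C₁ * y ^ ℓ' ∧ |deriv W y| ≤ C₂ * y ^ (ℓ' - 1) := by
  intro W
  have hα0 : 0 < |α| := abs_pos.mpr hα
  set M : ℝ := 1/r + 1 with hMdef
  have hM0 : 0 < M := by
    rw [hMdef]; positivity
  set A : ℝ := M * |α| * C with hAdef
  have hA0 : 0 < A := by positivity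
  -- summability of (k+1)(1/2)^k
  have hS : Summable (fun k : ℕ => ((k:ℝ)+1) * (1/2)^k) := by
    have h1 := summable_pow_mul_geometric_of_norm_lt_one (R := ℝ) 1
      (r := 1/2) (by rw [Real.norm_eq_abs, abs_of_nonneg (by norm_num : (0:ℝ) ≤ 1/2)]; norm_num)
    have h2 : Summable (fun n : ℕ => ((1:ℝ)/2)^n) :=
      summable_geometric_of_lt_one (by norm_num) (by norm_num)
    exact (h1.add h2).congr (fun n => by push_cast; ring)
  set S : ℝ := ∑' k : ℕ, ((k:ℝ)+1) * (1/2)^k with hSdef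
  have hS1 : (1:ℝ) ≤ S := by
    have h0 := Summable.le_tsum hS 0 (fun j _ => by positivity)
    rw [hSdef]
    exact le_trans (by norm_num) h0
  have hS0 : 0 < S := lt_of_lt_of_le one_pos hS1
  refine ⟨2*A, by linarith, S * (2*M*|α| * C), mul_pos hS0 (by positivity), ?_⟩
  set y₁ : ℝ := min y₀ ((1/(2*A)) ^ (ℓ'⁻¹)) with hy₁def
  have hy₁0 : 0 < y₁ := lt_min hy₀ (Real.rpow_pos_of_pos (by positivity) _)
  refine ⟨y₁, hy₁0, ?_⟩
  have hy₁y₀ : y₁ ≤ y₀ := min_le_left _ _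
  -- P1 : smallness of A y^ℓ'
  have P1 : ∀ y ∈ Set.Ioo (0:ℝ) y₁, A * y ^ ℓ' ≤ 1/2 := by
    intro y hy
    have h1 : y ≤ (1/(2*A)) ^ (ℓ'⁻¹) := le_trans hy.2.le (min_le_right _ _)
    have h2 : y ^ ℓ' ≤ ((1/(2*A)) ^ (ℓ'⁻¹)) ^ ℓ' :=
      Real.rpow_le_rpow hy.1.le h1 hℓ'.le
    rw [Real.rpow_inv_rpow (by positivity) (ne_of_gt hℓ')] at h2
    calc A * y ^ ℓ' ≤ A * (1/(2*A)) := mul_le_mul_of_nonneg_left h2 hA0.le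
      _ = 1/2 := by field_simp
  -- P2 : |H y / y| ≤ C y^ℓ'
  have P2 : ∀ y ∈ Set.Ioo (0:ℝ) y₀, |H y / y| ≤ C * y ^ ℓ' := by
    intro y hy
    rw [abs_div, abs_of_pos hy.1, div_le_iff₀ hy.1]
    have h := hHbound y hy
    rw [Real.rpow_add hy.1, Real.rpow_one] at h
    calc |H y| ≤ C * (y * y ^ ℓ') := h
      _ = C * y ^ ℓ' * y := by ring
  -- P3 : derivative of H y / y bound
  have P3 : ∀ y ∈ Set.Ioo (0:ℝ) y₀,
      |(deriv H y * y - H y) / y^2| ≤ 2*C*y^(ℓ'-1) := by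
    intro y hy
    have hy0 := hy.1
    have h2 := hHderiv y hy
    have h3 := hHbound y hy
    have h4 : |deriv H y * y| ≤ C * y ^ ℓ' * y := by
      rw [abs_mul, abs_of_pos hy0]
      exact mul_le_mul_of_nonneg_right h2 hy0.le
    have h5 : C * y ^ ℓ' * y = C * y ^ (1+ℓ') := by
      rw [Real.rpow_add hy0, Real.rpow_one]; ring
    have h1 : |deriv H y * y - H y| ≤ 2*C*y^(1+ℓ') := by
      calc |deriv H y * y - H y| ≤ |deriv H y * y| + |H y| := abs_sub _ _
        _ ≤ C * y ^ (1+ℓ') + C * y ^ (1+ℓ') := add_le_add (h5 ▸ h4) h3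
        _ = 2*C*y^(1+ℓ') := by ring
    have hpow : y^(ℓ'-1) * y^(2:ℕ) = y^(1+ℓ') := by
      rw [← Real.rpow_natCast y 2, ← Real.rpow_add hy0]
      congr 1
      push_cast; ring
    rw [abs_div, abs_of_pos (by positivity : (0:ℝ) < y^2), div_le_iff₀ (by positivity)]
    calc |deriv H y * y - H y| ≤ 2*C*y^(1+ℓ') := h1
      _ = 2*C*y^(ℓ'-1) * y^2 := by rw [← hpow]; ring
  -- term bound T
  have T : ∀ y ∈ Set.Ioo (0:ℝ) y₁, ∀ k : ℕ,
      |genBinom (1/r) (k+1) * α ^ (k+1) * (H y / y) ^ (k+1)|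
        ≤ (1/2)^k * (A * y ^ ℓ') := by
    intro y hy k
    have hy0 := hy.1
    have hyIoo : y ∈ Set.Ioo (0:ℝ) y₀ := ⟨hy0, lt_of_lt_of_le hy.2 hy₁y₀⟩
    have hbM : |genBinom (1/r) (k+1)| ≤ M ^ (k+1) := by
      have := abs_genBinom_le (1/r) (k+1)
      rwa [abs_of_pos (by positivity : (0:ℝ) < 1/r)] at this
    have hq := P2 y hyIoo
    have hx0 : (0:ℝ) ≤ A * y ^ ℓ' := by positivity
    have hx2 := P1 y hy
    calc |genBinom (1/r) (k+1) * α ^ (k+1) * (H y / y) ^ (k+1)|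
        = |genBinom (1/r) (k+1)| * |α| ^ (k+1) * |H y / y| ^ (k+1) := by
          rw [abs_mul, abs_mul, abs_pow, abs_pow]
      _ ≤ M ^ (k+1) * |α| ^ (k+1) * (C * y ^ ℓ') ^ (k+1) := by
          gcongr
      _ = (A * y ^ ℓ') ^ (k+1) := by
          rw [show A * y ^ ℓ' = M * (|α| * (C * y ^ ℓ')) from by rw [hAdef]; ring,
            mul_pow, mul_pow]
          ring
      _ = (A * y ^ ℓ') ^ k * (A * y ^ ℓ') := pow_succ _ _
      _ ≤ (1/2)^k * (A * y ^ ℓ') := by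
          gcongr
  -- derivative term bound D
  have D : ∀ z ∈ Set.Ioo (0:ℝ) y₁, ∀ k : ℕ,
      |genBinom (1/r) (k+1) * α ^ (k+1) *
          ((((k:ℕ)+1 : ℕ):ℝ) * (H z / z) ^ k * ((deriv H z * z - H z) / z^2))|
        ≤ ((k:ℝ)+1) * (1/2)^k * (2*M*|α| * C*z^(ℓ'-1)) := by
    intro z hz k
    have hz0 := hz.1
    have hzIoo : z ∈ Set.Ioo (0:ℝ) y₀ := ⟨hz0, lt_of_lt_of_le hz.2 hy₁y₀⟩
    have hbM : |genBinom (1/r) (k+1)| ≤ M ^ (k+1) := by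
      have := abs_genBinom_le (1/r) (k+1)
      rwa [abs_of_pos (by positivity : (0:ℝ) < 1/r)] at this
    have hq := P2 z hzIoo
    have hD3 := P3 z hzIoo
    have hx0 : (0:ℝ) ≤ A * z ^ ℓ' := by positivity
    have hxk : (A * z ^ ℓ')^k ≤ (1/2)^k := pow_le_pow_left₀ hx0 (P1 z hz) k
    have hzpos : (0:ℝ) < z ^ (ℓ'-1) := Real.rpow_pos_of_pos hz0 _
    calc |genBinom (1/r) (k+1) * α ^ (k+1) *
          ((((k:ℕ)+1 : ℕ):ℝ) * (H z / z) ^ k * ((deriv H z * z - H z) / z^2))|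
        = |genBinom (1/r) (k+1)| * |α| ^ (k+1) *
            (((k:ℝ)+1) * |H z / z| ^ k * |(deriv H z * z - H z) / z^2|) := by
          rw [abs_mul, abs_mul, abs_mul, abs_mul, abs_pow, abs_pow,
            abs_of_nonneg (by positivity : (0:ℝ) ≤ ((((k:ℕ)+1 : ℕ):ℝ)))]
          push_cast
          ring
      _ ≤ M ^ (k+1) * |α| ^ (k+1) *
            (((k:ℝ)+1) * (C * z ^ ℓ') ^ k * (2*C*z^(ℓ'-1))) := by
          gcongr
      _ = ((k:ℝ)+1) * (A * z ^ ℓ')^k * (2*M*|α| * C*z^(ℓ'-1)) := by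
          rw [show A * z ^ ℓ' = M * (|α| * (C * z ^ ℓ')) from by rw [hAdef]; ring,
            mul_pow, mul_pow, pow_succ M k, pow_succ |α| k]
          ring
      _ ≤ ((k:ℝ)+1) * (1/2)^k * (2*M*|α| * C*z^(ℓ'-1)) := by
          gcongr
  -- per-term differentiability
  have hgd : ∀ (k : ℕ) (z : ℝ), z ∈ Set.Ioo (0:ℝ) y₀ →
      HasDerivAt (fun w => genBinom (1/r) (k+1) * α ^ (k+1) * (H w / w) ^ (k+1))
        (genBinom (1/r) (k+1) * α ^ (k+1) *
          ((((k:ℕ)+1 : ℕ):ℝ) * (H z / z) ^ k * ((deriv H z * z - H z) / z^2))) z := by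
    intro k z hz
    have h1 : HasDerivAt H (deriv H z) z := (hHdiff z hz).hasDerivAt
    have h2 : HasDerivAt (fun w => H w / w)
        ((deriv H z * z - H z * 1) / z^2) z :=
      h1.div (hasDerivAt_id z) (ne_of_gt hz.1)
    have h3 := h2.pow (k+1)
    have h4 := h3.const_mul (genBinom (1/r) (k+1) * α ^ (k+1))
    simp only [Pi.pow_apply] at h4
    refine h4.congr_deriv ?_
    simp only [Nat.add_sub_cancel]
    push_cast
    ring
  intro y hy
  have hy0 := hy.1
  have hyIoo₀ : y ∈ Set.Ioo (0:ℝ) y₀ := ⟨hy0, lt_of_lt_of_le hy.2 hy₁y₀⟩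
  set K : ℝ := max ((y/2)^(ℓ'-1)) (y₁^(ℓ'-1)) with hKdef
  have hy20 : (0:ℝ) < y/2 := by linarith
  have hyt : y ∈ Set.Ioo (y/2) y₁ := ⟨by linarith, hy.2⟩
  have hu : Summable (fun k : ℕ => ((k:ℝ)+1)*(1/2)^k * (2*M*|α| * C*K)) :=
    hS.mul_right _
  have hW : HasDerivAt (fun w => ∑' k : ℕ, genBinom (1/r) (k+1) * α ^ (k+1) *
      (H w / w) ^ (k+1))
      (∑' k : ℕ, genBinom (1/r) (k+1) * α ^ (k+1) *
        ((((k:ℕ)+1 : ℕ):ℝ) * (H y / y) ^ k * ((deriv H y * y - H y) / y^2))) y := by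
    refine hasDerivAt_tsum_of_isPreconnected hu isOpen_Ioo isPreconnected_Ioo
      (fun k z hz => hgd k z ⟨lt_trans hy20 hz.1, lt_of_lt_of_le hz.2 hy₁y₀⟩)
      (fun k z hz => ?_) hyt ?_ hyt
    · have hzIoo : z ∈ Set.Ioo (0:ℝ) y₁ := ⟨lt_trans hy20 hz.1, hz.2⟩
      have hKz : z ^ (ℓ'-1) ≤ K := rpow_le_max_aux hy20 hz.1.le hz.2.le
      rw [Real.norm_eq_abs]
      calc |genBinom (1/r) (k+1) * α ^ (k+1) *
            ((((k:ℕ)+1 : ℕ):ℝ) * (H z / z) ^ k * ((deriv H z * z - H z) / z^2))|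
          ≤ ((k:ℝ)+1) * (1/2)^k * (2*M*|α| * C*z^(ℓ'-1)) := D z hzIoo k
        _ ≤ ((k:ℝ)+1) * (1/2)^k * (2*M*|α| * C*K) := by gcongr
    · refine Summable.of_norm_bounded (g := fun k => (1/2)^k * (A * y ^ ℓ'))
        ((summable_geometric_of_lt_one (by norm_num) (by norm_num)).mul_right _)
        (fun k => ?_)
      rw [Real.norm_eq_abs]
      exact T y hy k
  have hWdiff : DifferentiableAt ℝ W y := hW.differentiableAt
  have hWderiv : deriv W y = ∑' k : ℕ, genBinom (1/r) (k+1) * α ^ (k+1) *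
      ((((k:ℕ)+1 : ℕ):ℝ) * (H y / y) ^ k * ((deriv H y * y - H y) / y^2)) :=
    hW.deriv
  refine ⟨hWdiff, ?_, ?_⟩
  · have hgeo : HasSum (fun k : ℕ => (1/2:ℝ)^k * (A * y ^ ℓ')) (2 * (A * y ^ ℓ')) :=
      hasSum_geometric_two.mul_right _
    have h := tsum_of_norm_bounded hgeo
      (fun k => by rw [Real.norm_eq_abs]; exact T y hy k)
    rw [Real.norm_eq_abs] at h
    calc |W y| ≤ 2 * (A * y ^ ℓ') := h
      _ = 2*A * y ^ ℓ' := by ring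
  · rw [hWderiv]
    have hsum2 : HasSum (fun k : ℕ => ((k:ℝ)+1)*(1/2)^k * (2*M*|α| * C*y^(ℓ'-1)))
        (S * (2*M*|α| * C*y^(ℓ'-1))) := hS.hasSum.mul_right _
    have h := tsum_of_norm_bounded hsum2
      (fun k => by rw [Real.norm_eq_abs]; exact D y hy k)
    rw [Real.norm_eq_abs] at h
    calc |∑' k : ℕ, genBinom (1/r) (k+1) * α ^ (k+1) *
          ((((k:ℕ)+1 : ℕ):ℝ) * (H y / y) ^ k * ((deriv H y * y - H y) / y^2))|
        ≤ S * (2*M*|α| * C*y^(ℓ'-1)) := h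
      _ = S * (2*M*|α| * C) * y^(ℓ'-1) := by ring
end

section
/- Let n ≥ 1, a < 0, and consider C₁(θ) := cosθ sinθ (1 + a sin^{2n−1}θ) / ((2n−1)cos²θ − 2a sin^{2n+1}θ) on [0, π]. Then C₁(π/2 − φ) = −C₁(π/2 + φ) for all φ, and consequently ∫₀^π C₁(θ) dθ = 0, so exp(∫₀^π C₁(θ) dθ) = 1. -/
open Real

/-- The coefficient `C₁(θ) = cosθ sinθ (1 + a sin^{2n−1}θ)/((2n−1)cos²θ − 2a sin^{2n+1}θ)`
for the cusp is antisymmetric about `θ = π/2`, hence `∫₀^π C₁ = 0` and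
`exp(∫₀^π C₁) = 1`. -/
theorem cusp_first_coefficient_one (n : ℕ) (hn : 1 ≤ n) (a : ℝ) (ha : a < 0) :
    let C₁ : ℝ → ℝ := fun θ =>
      (Real.cos θ * Real.sin θ * (1 + a * Real.sin θ ^ (2 * n - 1))) /
        (((2 * n : ℝ) - 1) * Real.cos θ ^ 2 - 2 * a * Real.sin θ ^ (2 * n + 1))
    (∀ φ : ℝ, C₁ (Real.pi / 2 - φ) = -C₁ (Real.pi / 2 + φ)) ∧
      (∫ θ in (0 : ℝ)..Real.pi, C₁ θ) = 0 ∧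
      Real.exp (∫ θ in (0 : ℝ)..Real.pi, C₁ θ) = 1 := by
  intro C₁
  have hanti : ∀ φ : ℝ, C₁ (Real.pi / 2 - φ) = -C₁ (Real.pi / 2 + φ) := by
    intro φ
    have e : Real.pi / 2 + φ = φ + Real.pi / 2 := by ring
    simp only [C₁, e, Real.cos_pi_div_two_sub, Real.sin_pi_div_two_sub,
      Real.cos_add_pi_div_two, Real.sin_add_pi_div_two]
    rw [← neg_div]
    ring_nf
  have hflip : ∀ θ : ℝ, C₁ (Real.pi - θ) = -C₁ θ := by
    intro θ
    have := hanti (Real.pi / 2 - θ)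
    have h1 : Real.pi / 2 - (Real.pi / 2 - θ) = θ := by ring
    have h2 : Real.pi / 2 + (Real.pi / 2 - θ) = Real.pi - θ := by ring
    rw [h1, h2] at this
    linarith
  have hint : (∫ θ in (0 : ℝ)..Real.pi, C₁ θ) = 0 := by
    have hsub : (∫ θ in (0 : ℝ)..Real.pi, C₁ (Real.pi - θ)) =
        ∫ θ in (0 : ℝ)..Real.pi, C₁ θ := by
      have := intervalIntegral.integral_comp_sub_left (a := (0:ℝ)) (b := Real.pi)
        C₁ Real.pi
      simpa using this
    have hneg : (∫ θ in (0 : ℝ)..Real.pi, C₁ (Real.pi - θ)) =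
        -(∫ θ in (0 : ℝ)..Real.pi, C₁ θ) := by
      rw [show (fun θ => C₁ (Real.pi - θ)) = fun θ => -C₁ θ from funext hflip]
      exact intervalIntegral.integral_neg
    linarith [hsub, hneg]
  exact ⟨hanti, hint, by rw [hint]; exact Real.exp_zero⟩
end
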